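/- arXiv:1902.04327 — 7 statements merged into one kernel-verified Lean document; each statement's English description precedes it below -/
import Mathlib

section
/- Let N = 2n+1 with n ≥ 1, and let t_j = 2π(j−1)/N. Let A_{0,0} and A_{0,k}, B_{0,k}, A_{1,k}, B_{1,k} (k = 1,…,n) be arbitrary real numbers, and define T(t) = A_{0,0}/2 + (1/N) Σ_{k=1}^{n} { [(N−k)A_{0,k} − B_{1,k}] cos(kt) + [kA_{0,k} + B_{1,k}] cos((N−k)t) + [(N−k)B_{0,k} + A_{1,k}] sin(kt) + [−kB_{0,k} + A_{1,k}] sin((N−k)t) }. Then for every integer j: T(t_j) = A_{0,0}/2 + Σ_{k=1}^{n} [A_{0,k} cos(k t_j) + B_{0,k} sin(k t_j)], and T′(t_j) = Σ_{k=1}^{n} [A_{1,k} cos(k t_j) + B_{1,k} sin(k t_j)]. -/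
open Real Finset

private lemma hd_cos (c a x : ℝ) :
    HasDerivAt (fun t => c * Real.cos (a * t)) (-(c * a * Real.sin (a * x))) x := by
  have h := ((Real.hasDerivAt_cos (a * x)).comp x ((hasDerivAt_id x).const_mul a)).const_mul c
  refine h.congr_deriv ?_
  ring

private lemma hd_sin (c a x : ℝ) :
    HasDerivAt (fun t => c * Real.sin (a * t)) (c * a * Real.cos (a * x)) x := by
  have h := ((Real.hasDerivAt_sin (a * x)).comp x ((hasDerivAt_id x).const_mul a)).const_mul c
  refine h.congr_deriv ?_
  ring

/-- Formula (5): the Hermite trigonometric polynomial `T` built from the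
coefficients `A₀ₖ, B₀ₖ` (of the interpolant of `f`) and `A₁ₖ, B₁ₖ` (of the
interpolant of `f'`) interpolates the corresponding trigonometric polynomials
and their values at the nodes `t_j = 2π(j-1)/N` of the grid `Δ_N^{(0)}`. -/
theorem hermite_formula5_grid0 (n : ℕ) (hn : 1 ≤ n) (N : ℕ) (hN : N = 2 * n + 1)
    (A₀ B₀ A₁ B₁ : ℕ → ℝ) (T : ℝ → ℝ)
    (hT : ∀ t : ℝ, T t = A₀ 0 / 2 + (1 / (N : ℝ)) * ∑ k ∈ Icc 1 n,
      ((((N : ℝ) - k) * A₀ k - B₁ k) * cos ((k : ℝ) * t) +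
       ((k : ℝ) * A₀ k + B₁ k) * cos (((N : ℝ) - k) * t) +
       (((N : ℝ) - k) * B₀ k + A₁ k) * sin ((k : ℝ) * t) +
       (-(k : ℝ) * B₀ k + A₁ k) * sin (((N : ℝ) - k) * t)))
    (j : ℤ) :
    T (2 * π * ((j : ℝ) - 1) / N) = A₀ 0 / 2 + ∑ k ∈ Icc 1 n,
      (A₀ k * cos ((k : ℝ) * (2 * π * ((j : ℝ) - 1) / N)) +
       B₀ k * sin ((k : ℝ) * (2 * π * ((j : ℝ) - 1) / N))) ∧
    deriv T (2 * π * ((j : ℝ) - 1) / N) = ∑ k ∈ Icc 1 n,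
      (A₁ k * cos ((k : ℝ) * (2 * π * ((j : ℝ) - 1) / N)) +
       B₁ k * sin ((k : ℝ) * (2 * π * ((j : ℝ) - 1) / N))) := by
  have hNz : (N : ℝ) ≠ 0 := by
    have : 0 < N := by omega
    positivity
  set s : ℝ := 2 * π * ((j : ℝ) - 1) / N with hs
  have hNs : (N : ℝ) * s = ((j - 1 : ℤ) : ℝ) * (2 * π) := by
    rw [hs]
    push_cast
    field_simp
  have hshift : ∀ k : ℕ, ((N : ℝ) - k) * s = ((j - 1 : ℤ) : ℝ) * (2 * π) - (k : ℝ) * s := by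
    intro k
    rw [← hNs]; ring
  have hcos : ∀ k : ℕ, Real.cos (((N : ℝ) - k) * s) = Real.cos ((k : ℝ) * s) := by
    intro k
    rw [hshift k, Real.cos_int_mul_two_pi_sub]
  have hsin : ∀ k : ℕ, Real.sin (((N : ℝ) - k) * s) = -Real.sin ((k : ℝ) * s) := by
    intro k
    rw [hshift k, Real.sin_int_mul_two_pi_sub]
  constructor
  · rw [hT s, Finset.mul_sum, add_right_inj]
    refine Finset.sum_congr rfl fun k _ => ?_
    rw [hcos k, hsin k]
    field_simp
    ring
  · have hTf : T = fun t => A₀ 0 / 2 + (1 / (N : ℝ)) * ∑ k ∈ Icc 1 n,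
      ((((N : ℝ) - k) * A₀ k - B₁ k) * Real.cos ((k : ℝ) * t) +
       ((k : ℝ) * A₀ k + B₁ k) * Real.cos (((N : ℝ) - k) * t) +
       (((N : ℝ) - k) * B₀ k + A₁ k) * Real.sin ((k : ℝ) * t) +
       (-(k : ℝ) * B₀ k + A₁ k) * Real.sin (((N : ℝ) - k) * t)) := funext hT
    have hD : HasDerivAt T ((1 / (N : ℝ)) * ∑ k ∈ Icc 1 n,
        (-((((N : ℝ) - k) * A₀ k - B₁ k) * (k : ℝ) * Real.sin ((k : ℝ) * s)) +
         -(((k : ℝ) * A₀ k + B₁ k) * ((N : ℝ) - k) * Real.sin (((N : ℝ) - k) * s)) +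
         (((N : ℝ) - k) * B₀ k + A₁ k) * (k : ℝ) * Real.cos ((k : ℝ) * s) +
         (-(k : ℝ) * B₀ k + A₁ k) * ((N : ℝ) - k) * Real.cos (((N : ℝ) - k) * s))) s := by
      rw [hTf]
      refine HasDerivAt.const_add _ (HasDerivAt.const_mul _ ?_)
      refine HasDerivAt.fun_sum fun k _ => ?_
      exact (((hd_cos _ _ s).add (hd_cos _ _ s)).add (hd_sin _ _ s)).add (hd_sin _ _ s)
    rw [hD.deriv, Finset.mul_sum]
    refine Finset.sum_congr rfl fun k _ => ?_
    rw [hcos k, hsin k]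
    field_simp
    ring
end

section
/- Let N = 2n+1 with n ≥ 1, and let t_j = π(2j−1)/N. Let A_{0,0} and A_{0,k}, B_{0,k}, A_{1,k}, B_{1,k} (k = 1,…,n) be arbitrary real numbers, and define T(t) = A_{0,0}/2 + (1/N) Σ_{k=1}^{n} { [(N−k)A_{0,k} − B_{1,k}] cos(kt) − [kA_{0,k} + B_{1,k}] cos((N−k)t) + [(N−k)B_{0,k} + A_{1,k}] sin(kt) + [kB_{0,k} − A_{1,k}] sin((N−k)t) }. Then for every integer j: T(t_j) = A_{0,0}/2 + Σ_{k=1}^{n} [A_{0,k} cos(k t_j) + B_{0,k} sin(k t_j)], and T′(t_j) = Σ_{k=1}^{n} [A_{1,k} cos(k t_j) + B_{1,k} sin(k t_j)]. -/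
/-! At a node `t` of the grid, `N t = (2j - 1)π`, so `cos (N t) = -1` and the frequency `N - k`
aliases to `k`: `cos ((N - k) t) = -cos (k t)` and `sin ((N - k) t) = sin (k t)`. Both in `T` and in
`T'` each summand then collapses to `N` times the corresponding term of the interpolant of `f`,
respectively of `f'`. -/

open Real Finset

section Aliasing

variable {N x : ℝ}

theorem cos_sub_mul_of_cos_mul_eq_neg_one (hx : cos (N * x) = -1) (k : ℝ) :
    cos ((N - k) * x) = -cos (k * x) := by
  have hsin : sin (N * x) = 0 := sin_eq_zero_iff_cos_eq.mpr (Or.inr hx)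
  rw [sub_mul, cos_sub, hx, hsin]
  ring

theorem sin_sub_mul_of_cos_mul_eq_neg_one (hx : cos (N * x) = -1) (k : ℝ) :
    sin ((N - k) * x) = sin (k * x) := by
  have hsin : sin (N * x) = 0 := sin_eq_zero_iff_cos_eq.mpr (Or.inr hx)
  rw [sub_mul, sin_sub, hx, hsin]
  ring

end Aliasing

theorem cos_mul_grid_node {N : ℝ} (hN : N ≠ 0) (j : ℤ) :
    cos (N * (π * (2 * (j : ℝ) - 1) / N)) = -1 := by
  rw [mul_div_cancel₀ _ hN, ← cos_int_mul_two_pi_sub_pi j]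
  ring_nf

/-- The `k`-th summand of formula (6), before division by `N`. -/
noncomputable def hermiteSummand (N k a₀ b₀ a₁ b₁ t : ℝ) : ℝ :=
  ((N - k) * a₀ - b₁) * cos (k * t) - (k * a₀ + b₁) * cos ((N - k) * t) +
    ((N - k) * b₀ + a₁) * sin (k * t) + (k * b₀ - a₁) * sin ((N - k) * t)

section HermiteSummand

variable {N x : ℝ} (k a₀ b₀ a₁ b₁ : ℝ)

theorem hasDerivAt_hermiteSummand (t : ℝ) :
    HasDerivAt (hermiteSummand N k a₀ b₀ a₁ b₁)
      (-(k * ((N - k) * a₀ - b₁)) * sin (k * t) + (N - k) * (k * a₀ + b₁) * sin ((N - k) * t) +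
        k * ((N - k) * b₀ + a₁) * cos (k * t) + (N - k) * (k * b₀ - a₁) * cos ((N - k) * t)) t := by
  have hk := (hasDerivAt_id t).const_mul k
  have hNk := (hasDerivAt_id t).const_mul (N - k)
  simp only [id, mul_one] at hk hNk
  exact ((((hk.cos.const_mul ((N - k) * a₀ - b₁)).sub (hNk.cos.const_mul (k * a₀ + b₁))).add
    (hk.sin.const_mul ((N - k) * b₀ + a₁))).add (hNk.sin.const_mul (k * b₀ - a₁))).congr_deriv
      (by ring)

theorem hermiteSummand_of_cos_mul_eq_neg_one (hx : cos (N * x) = -1) :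
    hermiteSummand N k a₀ b₀ a₁ b₁ x = N * (a₀ * cos (k * x) + b₀ * sin (k * x)) := by
  rw [hermiteSummand, cos_sub_mul_of_cos_mul_eq_neg_one hx, sin_sub_mul_of_cos_mul_eq_neg_one hx]
  ring

theorem hasDerivAt_hermiteSummand_of_cos_mul_eq_neg_one (hx : cos (N * x) = -1) :
    HasDerivAt (hermiteSummand N k a₀ b₀ a₁ b₁)
      (N * (a₁ * cos (k * x) + b₁ * sin (k * x))) x := by
  convert hasDerivAt_hermiteSummand k a₀ b₀ a₁ b₁ x using 1
  rw [cos_sub_mul_of_cos_mul_eq_neg_one hx, sin_sub_mul_of_cos_mul_eq_neg_one hx]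
  ring

end HermiteSummand

theorem hermite_formula6_grid1_general (n : ℕ) (N : ℕ) (hN : N = 2 * n + 1)
    (A₀ B₀ A₁ B₁ : ℕ → ℝ) (T : ℝ → ℝ)
    (hT : ∀ t : ℝ, T t = A₀ 0 / 2 + (1 / (N : ℝ)) * ∑ k ∈ Icc 1 n,
      ((((N : ℝ) - k) * A₀ k - B₁ k) * cos ((k : ℝ) * t) -
       ((k : ℝ) * A₀ k + B₁ k) * cos (((N : ℝ) - k) * t) +
       (((N : ℝ) - k) * B₀ k + A₁ k) * sin ((k : ℝ) * t) +
       ((k : ℝ) * B₀ k - A₁ k) * sin (((N : ℝ) - k) * t)))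
    (j : ℤ) :
    T (π * (2 * (j : ℝ) - 1) / N) = A₀ 0 / 2 + ∑ k ∈ Icc 1 n,
      (A₀ k * cos ((k : ℝ) * (π * (2 * (j : ℝ) - 1) / N)) +
       B₀ k * sin ((k : ℝ) * (π * (2 * (j : ℝ) - 1) / N))) ∧
    deriv T (π * (2 * (j : ℝ) - 1) / N) = ∑ k ∈ Icc 1 n,
      (A₁ k * cos ((k : ℝ) * (π * (2 * (j : ℝ) - 1) / N)) +
       B₁ k * sin ((k : ℝ) * (π * (2 * (j : ℝ) - 1) / N))) := by
  have hN0 : (N : ℝ) ≠ 0 := by rw [hN]; positivity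
  have hT' : T = fun t => A₀ 0 / 2 + 1 / (N : ℝ) *
      ∑ k ∈ Icc 1 n, hermiteSummand N k (A₀ k) (B₀ k) (A₁ k) (B₁ k) t := funext hT
  have hx := cos_mul_grid_node hN0 j
  have hderiv := ((HasDerivAt.fun_sum fun k (_ : k ∈ Icc 1 n) =>
    hasDerivAt_hermiteSummand_of_cos_mul_eq_neg_one k (A₀ k) (B₀ k) (A₁ k) (B₁ k) hx).const_mul
      (1 / (N : ℝ))).const_add (A₀ 0 / 2)
  rw [← hT'] at hderiv
  refine ⟨?_, ?_⟩
  · simp only [hT', mul_sum]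
    congr 1
    refine sum_congr rfl fun k _ => ?_
    rw [hermiteSummand_of_cos_mul_eq_neg_one _ _ _ _ _ hx]
    field_simp
  · rw [hderiv.deriv, mul_sum]
    refine sum_congr rfl fun k _ => ?_
    field_simp

/-- Formula (6): the Hermite trigonometric polynomial `T` built from the
coefficients `A₀ₖ, B₀ₖ` (of the interpolant of `f`) and `A₁ₖ, B₁ₖ` (of the
interpolant of `f'`) interpolates the corresponding trigonometric polynomials
and their values at the nodes `t_j = π(2j-1)/N` of the grid `Δ_N^{(1)}`. -/
theorem hermite_formula6_grid1 (n : ℕ) (hn : 1 ≤ n) (N : ℕ) (hN : N = 2 * n + 1)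
    (A₀ B₀ A₁ B₁ : ℕ → ℝ) (T : ℝ → ℝ)
    (hT : ∀ t : ℝ, T t = A₀ 0 / 2 + (1 / (N : ℝ)) * ∑ k ∈ Icc 1 n,
      ((((N : ℝ) - k) * A₀ k - B₁ k) * cos ((k : ℝ) * t) -
       ((k : ℝ) * A₀ k + B₁ k) * cos (((N : ℝ) - k) * t) +
       (((N : ℝ) - k) * B₀ k + A₁ k) * sin ((k : ℝ) * t) +
       ((k : ℝ) * B₀ k - A₁ k) * sin (((N : ℝ) - k) * t)))
    (j : ℤ) :
    T (π * (2 * (j : ℝ) - 1) / N) = A₀ 0 / 2 + ∑ k ∈ Icc 1 n,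
      (A₀ k * cos ((k : ℝ) * (π * (2 * (j : ℝ) - 1) / N)) +
       B₀ k * sin ((k : ℝ) * (π * (2 * (j : ℝ) - 1) / N))) ∧
    deriv T (π * (2 * (j : ℝ) - 1) / N) = ∑ k ∈ Icc 1 n,
      (A₁ k * cos ((k : ℝ) * (π * (2 * (j : ℝ) - 1) / N)) +
       B₁ k * sin ((k : ℝ) * (π * (2 * (j : ℝ) - 1) / N))) :=
  hermite_formula6_grid1_general n N hN A₀ B₀ A₁ B₁ T hT j
end

section
/- Let N and k be real numbers with N ≠ 0, and let A, B, C be real numbers. Then the triple x = [(N²−k²)A − 2kB + C]/N², y = [(kN+k²)A + (N+2k)B − C]/(2N²), z = [(k²−kN)A + (2k−N)B − C]/(2N²) is the unique solution of the linear system x + y + z = A, −k·x + (N−k)·y − (N+k)·z = B, −k²·x − (N−k)²·y − (N+k)²·z = C. -/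
/-!
The coefficient matrix is, up to the sign of its last row, the Vandermonde matrix of the
nodes `-k`, `N - k`, `-(N + k)`, whose pairwise differences `N`, `-N`, `-2N` give determinant
`-2N³`. Hence the system has a unique solution over any field of characteristic not `2`; the
coefficients of `A`, `B`, `C` in the stated formulas are the rows of the inverse matrix.
-/

section CosineSystem3

variable {K : Type*} [Field K] {N k A B C x y z : K}

theorem cosine_system3_eq_of_solves (hN : N ≠ 0) (h2 : (2 : K) ≠ 0)
    (hA : x + y + z = A) (hB : -k * x + (N - k) * y - (N + k) * z = B)
    (hC : -k ^ 2 * x - (N - k) ^ 2 * y - (N + k) ^ 2 * z = C) :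
    x = ((N ^ 2 - k ^ 2) * A - 2 * k * B + C) / N ^ 2 ∧
      y = ((k * N + k ^ 2) * A + (N + 2 * k) * B - C) / (2 * N ^ 2) ∧
      z = ((k ^ 2 - k * N) * A + (2 * k - N) * B - C) / (2 * N ^ 2) := by
  refine ⟨?_, ?_, ?_⟩ <;> field_simp
  · linear_combination (N ^ 2 - k ^ 2) * hA - 2 * k * hB + hC
  · linear_combination (k * N + k ^ 2) * hA + (N + 2 * k) * hB - hC
  · linear_combination (k ^ 2 - k * N) * hA + (2 * k - N) * hB - hC

theorem cosine_system3_solves_of_eq (hN : N ≠ 0) (h2 : (2 : K) ≠ 0)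
    (hx : x = ((N ^ 2 - k ^ 2) * A - 2 * k * B + C) / N ^ 2)
    (hy : y = ((k * N + k ^ 2) * A + (N + 2 * k) * B - C) / (2 * N ^ 2))
    (hz : z = ((k ^ 2 - k * N) * A + (2 * k - N) * B - C) / (2 * N ^ 2)) :
    x + y + z = A ∧ -k * x + (N - k) * y - (N + k) * z = B ∧
      -k ^ 2 * x - (N - k) ^ 2 * y - (N + k) ^ 2 * z = C := by
  subst hx hy hz
  refine ⟨?_, ?_, ?_⟩ <;> field_simp <;> ring

end CosineSystem3

/-- The 3×3 linear system for the cosine coefficients of the `p = 2` Hermite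
trigonometric polynomial on the grid `Δ_N^{(0)}` has the indicated unique
solution. -/
theorem cosine_system3_unique_solution (N k A B C : ℝ) (hN : N ≠ 0) :
    ∀ x y z : ℝ,
      (x + y + z = A ∧
       -k * x + (N - k) * y - (N + k) * z = B ∧
       -k ^ 2 * x - (N - k) ^ 2 * y - (N + k) ^ 2 * z = C) ↔
      (x = ((N ^ 2 - k ^ 2) * A - 2 * k * B + C) / N ^ 2 ∧
       y = ((k * N + k ^ 2) * A + (N + 2 * k) * B - C) / (2 * N ^ 2) ∧
       z = ((k ^ 2 - k * N) * A + (2 * k - N) * B - C) / (2 * N ^ 2)) := by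
  intro x y z
  constructor
  · rintro ⟨hA, hB, hC⟩
    exact cosine_system3_eq_of_solves hN two_ne_zero hA hB hC
  · rintro ⟨hx, hy, hz⟩
    exact cosine_system3_solves_of_eq hN two_ne_zero hx hy hz
end

section
/- Let N = 2n+1 with n ≥ 1, and let t_j = π(2j−1)/N. Let A_{0,0} and A_{0,k}, B_{0,k}, A_{1,k}, B_{1,k}, A_{2,k}, B_{2,k} (k = 1,…,n) be arbitrary real numbers. Define T(t) = A_{0,0}/2 + Σ_{k=1}^{n} [ a_k cos(kt) + a_{N−k} cos((N−k)t) + a_{N+k} cos((N+k)t) + b_k sin(kt) + b_{N−k} sin((N−k)t) + b_{N+k} sin((N+k)t) ] with a_k = [A_{0,k}(N²−k²) − 2kB_{1,k} + A_{2,k}]/N², b_k = [B_{0,k}(N²−k²) + 2kA_{1,k} + B_{2,k}]/N², a_{N−k} = [−A_{0,k}(kN+k²) − B_{1,k}(N+2k) + A_{2,k}]/(2N²), b_{N−k} = [B_{0,k}(kN+k²) − A_{1,k}(N+2k) − B_{2,k}]/(2N²), a_{N+k} = [A_{0,k}(kN−k²) + B_{1,k}(N−2k) + A_{2,k}]/(2N²),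 b_{N+k} = [B_{0,k}(kN−k²) − A_{1,k}(N−2k) + B_{2,k}]/(2N²). Then for every integer j: T(t_j) = A_{0,0}/2 + Σ_{k=1}^{n} [A_{0,k} cos(k t_j) + B_{0,k} sin(k t_j)], T′(t_j) = Σ_{k=1}^{n} [A_{1,k} cos(k t_j) + B_{1,k} sin(k t_j)], and T″(t_j) = Σ_{k=1}^{n} [A_{2,k} cos(k t_j) + B_{2,k} sin(k t_j)]. -/
/-!
At a node `t = π(2j-1)/N` the angle `Nt` is an odd multiple of `π`, so the modes of
frequency `N ∓ k` alias onto frequency `k`: `cos((N ∓ k)t) = -cos(kt)` and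
`sin((N ∓ k)t) = ±sin(kt)`. Differentiating `T` termwise sends the coefficients `(α, β)` of
frequency `c` to `(cβ, -cα)`, so `T`, `T'` and `T''` restricted to the nodes are trigonometric
polynomials of degree `n` whose `k`-th coefficients are linear in `a_k, b_k, a_{N∓k}, b_{N∓k}`.
The coefficients of formula (8) are the solution of the resulting `6 × 6` linear system.
-/

open Real Finset

noncomputable def trigSum {ι : Type*} (s : Finset ι) (α β c : ι → ℝ) (t : ℝ) : ℝ :=
  ∑ i ∈ s, (α i * cos (c i * t) + β i * sin (c i * t))

theorem hasDerivAt_trigSum {ι : Type*} (s : Finset ι) (α β c : ι → ℝ) (t : ℝ) :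
    HasDerivAt (trigSum s α β c)
      (trigSum s (fun i => c i * β i) (fun i => -(c i * α i)) c t) t := by
  unfold trigSum
  refine HasDerivAt.fun_sum fun i _ => ?_
  have hcos := (((hasDerivAt_id t).const_mul (c i)).cos).const_mul (α i)
  have hsin := (((hasDerivAt_id t).const_mul (c i)).sin).const_mul (β i)
  refine (hcos.fun_add hsin).congr_deriv ?_
  simp only [id]
  ring

theorem deriv_trigSum {ι : Type*} (s : Finset ι) (α β c : ι → ℝ) :
    deriv (trigSum s α β c) = trigSum s (fun i => c i * β i) (fun i => -(c i * α i)) c :=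
  funext fun t => (hasDerivAt_trigSum s α β c t).deriv

theorem trigSum_congr {ι : Type*} {s : Finset ι} {α β α' β' c : ι → ℝ} {t : ℝ}
    (h : ∀ i ∈ s, α i = α' i ∧ β i = β' i) : trigSum s α β c t = trigSum s α' β' c t :=
  sum_congr rfl fun i hi => by rw [(h i hi).1, (h i hi).2]

theorem cos_sin_mul_grid_node {N : ℝ} (hN : N ≠ 0) (j : ℤ) :
    cos (N * (π * (2 * j - 1) / N)) = -1 ∧ sin (N * (π * (2 * j - 1) / N)) = 0 := by
  have hNt : N * (π * (2 * j - 1) / N) = ((2 * j - 1 : ℤ) : ℝ) * π := by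
    push_cast
    field_simp
  rw [hNt, cos_int_mul_pi, sin_int_mul_pi, Odd.neg_one_zpow ⟨j - 1, by ring⟩]
  exact ⟨rfl, rfl⟩

noncomputable def blockFreq (N : ℝ) : ℕ × Fin 3 → ℝ
  | (k, 0) => k
  | (k, 1) => N - k
  | (k, 2) => N + k

def blockCoeff (N : ℕ) (a : ℕ → ℝ) : ℕ × Fin 3 → ℝ
  | (k, 0) => a k
  | (k, 1) => a (N - k)
  | (k, 2) => a (N + k)

theorem trigSum_blocks (N : ℕ) (s : Finset ℕ) (a b : ℕ → ℝ) (t : ℝ) :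
    trigSum (s ×ˢ univ) (blockCoeff N a) (blockCoeff N b) (blockFreq N) t =
      ∑ k ∈ s, (a k * cos ((k : ℝ) * t) + a (N - k) * cos (((N : ℝ) - k) * t) +
        a (N + k) * cos (((N : ℝ) + k) * t) +
        b k * sin ((k : ℝ) * t) + b (N - k) * sin (((N : ℝ) - k) * t) +
        b (N + k) * sin (((N : ℝ) + k) * t)) := by
  rw [trigSum, sum_product]
  refine sum_congr rfl fun k _ => ?_
  simp only [Fin.sum_univ_three, blockCoeff, blockFreq]
  ring

theorem trigSum_blocks_of_cos_eq_neg_one {N t : ℝ} (hc : cos (N * t) = -1)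
    (hs : sin (N * t) = 0) (s : Finset ℕ) (α β : ℕ × Fin 3 → ℝ) :
    trigSum (s ×ˢ univ) α β (blockFreq N) t =
      trigSum s (fun k => α (k, 0) - α (k, 1) - α (k, 2))
        (fun k => β (k, 0) + β (k, 1) - β (k, 2)) (fun k => k) t := by
  rw [trigSum, trigSum, sum_product]
  refine sum_congr rfl fun k _ => ?_
  simp only [Fin.sum_univ_three, blockFreq, sub_mul, add_mul, cos_sub, cos_add, sin_sub, sin_add,
    hc, hs]
  ring

theorem hermite_block_coeffs {N k A₀ B₀ A₁ B₁ A₂ B₂ a b a' b' a'' b'' : ℝ} (hN : N ≠ 0)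
    (h : a = (A₀ * (N ^ 2 - k ^ 2) - 2 * k * B₁ + A₂) / N ^ 2 ∧
      b = (B₀ * (N ^ 2 - k ^ 2) + 2 * k * A₁ + B₂) / N ^ 2 ∧
      a' = (-A₀ * (k * N + k ^ 2) - B₁ * (N + 2 * k) + A₂) / (2 * N ^ 2) ∧
      b' = (B₀ * (k * N + k ^ 2) - A₁ * (N + 2 * k) - B₂) / (2 * N ^ 2) ∧
      a'' = (A₀ * (k * N - k ^ 2) + B₁ * (N - 2 * k) + A₂) / (2 * N ^ 2) ∧
      b'' = (B₀ * (k * N - k ^ 2) - A₁ * (N - 2 * k) + B₂) / (2 * N ^ 2)) :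
    (a - a' - a'' = A₀ ∧ b + b' - b'' = B₀) ∧
    (k * b - (N - k) * b' - (N + k) * b'' = A₁ ∧ -(k * a) - (N - k) * a' + (N + k) * a'' = B₁) ∧
    (-(k ^ 2 * a) + (N - k) ^ 2 * a' + (N + k) ^ 2 * a'' = A₂ ∧
      -(k ^ 2 * b) - (N - k) ^ 2 * b' + (N + k) ^ 2 * b'' = B₂) := by
  obtain ⟨rfl, rfl, rfl, rfl, rfl, rfl⟩ := h
  refine ⟨⟨?_, ?_⟩, ⟨?_, ?_⟩, ⟨?_, ?_⟩⟩ <;> field_simp <;> ring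

theorem hermite_formula8_grid1_general (n : ℕ) (N : ℕ) (hN : N = 2 * n + 1)
    (A₀ B₀ A₁ B₁ A₂ B₂ : ℕ → ℝ) (a b : ℕ → ℝ)
    (ha : ∀ k ∈ Icc 1 n,
      a k = (A₀ k * ((N : ℝ) ^ 2 - (k : ℝ) ^ 2) - 2 * k * B₁ k + A₂ k) / (N : ℝ) ^ 2 ∧
      b k = (B₀ k * ((N : ℝ) ^ 2 - (k : ℝ) ^ 2) + 2 * k * A₁ k + B₂ k) / (N : ℝ) ^ 2 ∧
      a (N - k) = (-A₀ k * ((k : ℝ) * N + (k : ℝ) ^ 2) - B₁ k * ((N : ℝ) + 2 * k) + A₂ k) /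
        (2 * (N : ℝ) ^ 2) ∧
      b (N - k) = (B₀ k * ((k : ℝ) * N + (k : ℝ) ^ 2) - A₁ k * ((N : ℝ) + 2 * k) - B₂ k) /
        (2 * (N : ℝ) ^ 2) ∧
      a (N + k) = (A₀ k * ((k : ℝ) * N - (k : ℝ) ^ 2) + B₁ k * ((N : ℝ) - 2 * k) + A₂ k) /
        (2 * (N : ℝ) ^ 2) ∧
      b (N + k) = (B₀ k * ((k : ℝ) * N - (k : ℝ) ^ 2) - A₁ k * ((N : ℝ) - 2 * k) + B₂ k) /
        (2 * (N : ℝ) ^ 2))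
    (T : ℝ → ℝ)
    (hT : ∀ t : ℝ, T t = A₀ 0 / 2 + ∑ k ∈ Icc 1 n,
      (a k * cos ((k : ℝ) * t) + a (N - k) * cos (((N : ℝ) - k) * t) +
       a (N + k) * cos (((N : ℝ) + k) * t) +
       b k * sin ((k : ℝ) * t) + b (N - k) * sin (((N : ℝ) - k) * t) +
       b (N + k) * sin (((N : ℝ) + k) * t)))
    (j : ℤ) :
    T (π * (2 * (j : ℝ) - 1) / N) = A₀ 0 / 2 + ∑ k ∈ Icc 1 n,
      (A₀ k * cos ((k : ℝ) * (π * (2 * (j : ℝ) - 1) / N)) +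
       B₀ k * sin ((k : ℝ) * (π * (2 * (j : ℝ) - 1) / N))) ∧
    deriv T (π * (2 * (j : ℝ) - 1) / N) = ∑ k ∈ Icc 1 n,
      (A₁ k * cos ((k : ℝ) * (π * (2 * (j : ℝ) - 1) / N)) +
       B₁ k * sin ((k : ℝ) * (π * (2 * (j : ℝ) - 1) / N))) ∧
    deriv (deriv T) (π * (2 * (j : ℝ) - 1) / N) = ∑ k ∈ Icc 1 n,
      (A₂ k * cos ((k : ℝ) * (π * (2 * (j : ℝ) - 1) / N)) +
       B₂ k * sin ((k : ℝ) * (π * (2 * (j : ℝ) - 1) / N))) := by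
  have hN0 : (N : ℝ) ≠ 0 := by rw [hN]; positivity
  set S := Icc 1 n ×ˢ (univ : Finset (Fin 3))
  have hT₀ (t : ℝ) :
      T t = A₀ 0 / 2 + trigSum S (blockCoeff N a) (blockCoeff N b) (blockFreq N) t := by
    rw [hT, trigSum_blocks]
  have hT₁ : deriv T = trigSum S (fun p => blockFreq N p * blockCoeff N b p)
      (fun p => -(blockFreq N p * blockCoeff N a p)) (blockFreq N) := by
    rw [funext hT₀, deriv_const_add', deriv_trigSum]
  obtain ⟨hc, hs⟩ := cos_sin_mul_grid_node hN0 j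
  have hfold := trigSum_blocks_of_cos_eq_neg_one hc hs (Icc 1 n)
  have hcoef := fun k hk => hermite_block_coeffs hN0 (ha k hk)
  refine ⟨?_, ?_, ?_⟩
  · rw [hT₀, hfold, add_right_inj]
    exact trigSum_congr fun k hk => (hcoef k hk).1
  · rw [hT₁, hfold]
    refine trigSum_congr fun k hk => ?_
    simpa only [blockFreq, blockCoeff, ← sub_eq_add_neg, sub_neg_eq_add] using (hcoef k hk).2.1
  · rw [hT₁, deriv_trigSum, hfold]
    refine trigSum_congr fun k hk => ?_
    simpa only [blockFreq, blockCoeff, mul_neg, ← sub_eq_add_neg, sub_neg_eq_add, ← mul_assoc,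
      ← sq] using (hcoef k hk).2.2

/-- Formula (8) with `I = 1`: the Hermite trigonometric polynomial `T` built
from the coefficients `A₀ₖ, B₀ₖ`, `A₁ₖ, B₁ₖ`, `A₂ₖ, B₂ₖ` matches, at the nodes
`t_j = π(2j-1)/N` of the grid `Δ_N^{(1)}`, the values of the trigonometric
polynomials interpolating `f`, `f'` and `f''`. -/
theorem hermite_formula8_grid1 (n : ℕ) (hn : 1 ≤ n) (N : ℕ) (hN : N = 2 * n + 1)
    (A₀ B₀ A₁ B₁ A₂ B₂ : ℕ → ℝ) (a b : ℕ → ℝ)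
    (ha : ∀ k ∈ Icc 1 n,
      a k = (A₀ k * ((N : ℝ) ^ 2 - (k : ℝ) ^ 2) - 2 * k * B₁ k + A₂ k) / (N : ℝ) ^ 2 ∧
      b k = (B₀ k * ((N : ℝ) ^ 2 - (k : ℝ) ^ 2) + 2 * k * A₁ k + B₂ k) / (N : ℝ) ^ 2 ∧
      a (N - k) = (-A₀ k * ((k : ℝ) * N + (k : ℝ) ^ 2) - B₁ k * ((N : ℝ) + 2 * k) + A₂ k) /
        (2 * (N : ℝ) ^ 2) ∧
      b (N - k) = (B₀ k * ((k : ℝ) * N + (k : ℝ) ^ 2) - A₁ k * ((N : ℝ) + 2 * k) - B₂ k) /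
        (2 * (N : ℝ) ^ 2) ∧
      a (N + k) = (A₀ k * ((k : ℝ) * N - (k : ℝ) ^ 2) + B₁ k * ((N : ℝ) - 2 * k) + A₂ k) /
        (2 * (N : ℝ) ^ 2) ∧
      b (N + k) = (B₀ k * ((k : ℝ) * N - (k : ℝ) ^ 2) - A₁ k * ((N : ℝ) - 2 * k) + B₂ k) /
        (2 * (N : ℝ) ^ 2))
    (T : ℝ → ℝ)
    (hT : ∀ t : ℝ, T t = A₀ 0 / 2 + ∑ k ∈ Icc 1 n,
      (a k * cos ((k : ℝ) * t) + a (N - k) * cos (((N : ℝ) - k) * t) +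
       a (N + k) * cos (((N : ℝ) + k) * t) +
       b k * sin ((k : ℝ) * t) + b (N - k) * sin (((N : ℝ) - k) * t) +
       b (N + k) * sin (((N : ℝ) + k) * t)))
    (j : ℤ) :
    T (π * (2 * (j : ℝ) - 1) / N) = A₀ 0 / 2 + ∑ k ∈ Icc 1 n,
      (A₀ k * cos ((k : ℝ) * (π * (2 * (j : ℝ) - 1) / N)) +
       B₀ k * sin ((k : ℝ) * (π * (2 * (j : ℝ) - 1) / N))) ∧
    deriv T (π * (2 * (j : ℝ) - 1) / N) = ∑ k ∈ Icc 1 n,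
      (A₁ k * cos ((k : ℝ) * (π * (2 * (j : ℝ) - 1) / N)) +
       B₁ k * sin ((k : ℝ) * (π * (2 * (j : ℝ) - 1) / N))) ∧
    deriv (deriv T) (π * (2 * (j : ℝ) - 1) / N) = ∑ k ∈ Icc 1 n,
      (A₂ k * cos ((k : ℝ) * (π * (2 * (j : ℝ) - 1) / N)) +
       B₂ k * sin ((k : ℝ) * (π * (2 * (j : ℝ) - 1) / N))) :=
  hermite_formula8_grid1_general n N hN A₀ B₀ A₁ B₁ A₂ B₂ a b ha T hT j
end

section
/- Let N = 2n+1 with n ≥ 1, let t_j = 2π(j−1)/N for j = 1,…,N, and let f_1,…,f_N and g_1,…,g_N be real numbers with Σ_{j=1}^{N} g_j = 0. Define A_{0,k} = (2/N) Σ_{j} f_j cos(k t_j), B_{0,k} = (2/N) Σ_{j} f_j sin(k t_j), A_{1,k} = (2/N) Σ_{j} g_j cos(k t_j), B_{1,k} = (2/N) Σ_{j} g_j sin(k t_j), and set T(t) = A_{0,0}/2 + (1/N) Σ_{k=1}^{n} { [(N−k)A_{0,k} − B_{1,k}] cos(kt) + [kA_{0,k} + B_{1,k}] cos((N−k)t)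 + [(N−k)B_{0,k} + A_{1,k}] sin(kt) + [−kB_{0,k} + A_{1,k}] sin((N−k)t) }. Then for every j = 1,…,N: T(t_j) = f_j and T′(t_j) = g_j. -/
/-!
At a node, `N t_j ∈ 2πℤ`, so the frequencies `k` and `N - k` alias there:
`cos ((N - k) t_j) = cos (k t_j)` and `sin ((N - k) t_j) = -sin (k t_j)`. Hence `T` and `T'` agree
at the nodes with the classical trigonometric interpolants of degree `n` with coefficients
`(A₀, B₀)` and `(A₁, B₁)` (the latter without its constant term `A₁ 0 / 2`, which vanishes because
the `g_j` are centered). These interpolate by the discrete orthogonality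
`1 + 2 ∑_{k=1}^n cos (2πkm/N) = 0` for `N ∤ m`, read off from the Dirichlet kernel identity
`sin (θ/2) (1 + 2 ∑_{k=1}^n cos kθ) = sin ((2n+1)θ/2)`.
-/

open Real Finset

theorem sin_half_mul_one_add_two_mul_sum_cos (n : ℕ) (θ : ℝ) :
    sin (θ / 2) * (1 + 2 * ∑ k ∈ Icc 1 n, cos (k * θ)) = sin ((2 * n + 1) * θ / 2) := by
  induction n with
  | zero => simp
  | succ n ih =>
    have hu : (2 * (n : ℝ) + 1) * θ / 2 = (n + 1 : ℕ) * θ - θ / 2 := by push_cast; ring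
    have hv : (2 * ((n + 1 : ℕ) : ℝ) + 1) * θ / 2 = (n + 1 : ℕ) * θ + θ / 2 := by push_cast; ring
    rw [sum_Icc_succ_top (by omega), hv, sin_add]
    rw [hu, sin_sub] at ih
    linear_combination ih

theorem one_add_two_mul_sum_cos_eq_zero {n N : ℕ} (hN : N = 2 * n + 1) {m : ℤ}
    (hm : ¬ (N : ℤ) ∣ m) : 1 + 2 * ∑ k ∈ Icc 1 n, cos (k * (2 * π * m / N)) = 0 := by
  have hN0 : (N : ℝ) ≠ 0 := by rw [hN]; positivity
  have hsin : sin (2 * π * m / N / 2) ≠ 0 := by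
    rw [Ne, sin_eq_zero_iff]
    rintro ⟨l, hl⟩
    field_simp at hl
    exact hm ⟨l, by rw [mul_comm]; exact_mod_cast hl.symm⟩
  have key := sin_half_mul_one_add_two_mul_sum_cos n (2 * π * m / N)
  rw [show (2 * n + 1 : ℝ) * (2 * π * m / N) / 2 = m * π by rw [hN]; push_cast; field_simp,
    sin_int_mul_pi] at key
  exact (mul_eq_zero.1 key).resolve_left hsin

theorem one_add_two_mul_sum_cos_eq_ite {n N : ℕ} (hN : N = 2 * n + 1) {m : ℤ}
    (hm : m.natAbs < N) :
    1 + 2 * ∑ k ∈ Icc 1 n, cos (k * (2 * π * m / N)) = if m = 0 then (N : ℝ) else 0 := by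
  split_ifs with h0
  · simp [h0, hN, add_comm]
  · refine one_add_two_mul_sum_cos_eq_zero hN fun hdvd => h0 ?_
    exact Int.eq_zero_of_dvd_of_natAbs_lt_natAbs hdvd (by simpa using hm)

noncomputable def trigPoly (n : ℕ) (A B : ℕ → ℝ) (x : ℝ) : ℝ :=
  A 0 / 2 + ∑ k ∈ Icc 1 n, (A k * cos (k * x) + B k * sin (k * x))

theorem trigPoly_apply_node {n N : ℕ} (hN : N = 2 * n + 1) {t : ℕ → ℝ}
    (ht : ∀ j, t j = 2 * π * ((j : ℝ) - 1) / N) {h A B : ℕ → ℝ}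
    (hA : ∀ k, A k = 2 / (N : ℝ) * ∑ j ∈ Icc 1 N, h j * cos (k * t j))
    (hB : ∀ k, B k = 2 / (N : ℝ) * ∑ j ∈ Icc 1 N, h j * sin (k * t j))
    {i : ℕ} (hi : i ∈ Icc 1 N) : trigPoly n A B (t i) = h i := by
  have hN0 : (N : ℝ) ≠ 0 := by rw [hN]; positivity
  have kernel : ∀ j ∈ Icc 1 N,
      1 + 2 * ∑ k ∈ Icc 1 n, cos (k * (t j - t i)) = if j = i then (N : ℝ) else 0 := by
    intro j hj
    have hdiff : t j - t i = 2 * π * ((j - i : ℤ) : ℝ) / N := by rw [ht, ht]; push_cast; ring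
    rw [mem_Icc] at hi hj
    rw [hdiff, one_add_two_mul_sum_cos_eq_ite hN (by omega)]
    simp [sub_eq_zero]
  have expand : ∀ k : ℕ, A k * cos (k * t i) + B k * sin (k * t i) =
      ∑ j ∈ Icc 1 N, h j / N * (2 * cos (k * (t j - t i))) := by
    intro k
    simp only [hA, hB, mul_sub, cos_sub, mul_sum, sum_mul, ← sum_add_distrib]
    exact sum_congr rfl fun j _ => by ring
  calc trigPoly n A B (t i)
      = ∑ j ∈ Icc 1 N, h j / N * (1 + 2 * ∑ k ∈ Icc 1 n, cos (k * (t j - t i))) := by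
        have mean : A 0 / 2 = ∑ j ∈ Icc 1 N, h j / N := by
          simp only [hA, CharP.cast_eq_zero, zero_mul, cos_zero, mul_one, mul_sum, sum_div]
          exact sum_congr rfl fun j _ => by ring
        rw [trigPoly, mean, sum_congr rfl fun k _ => expand k, sum_comm, ← sum_add_distrib]
        simp only [mul_add, mul_one, mul_sum]
    _ = ∑ j ∈ Icc 1 N, h j / N * (if j = i then (N : ℝ) else 0) :=
        sum_congr rfl fun j hj => by rw [kernel j hj]
    _ = h i := by simp [hi, hN0]

noncomputable def hermiteTrigPoly (n N : ℕ) (A₀ B₀ A₁ B₁ : ℕ → ℝ) (x : ℝ) : ℝ :=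
  A₀ 0 / 2 + (1 / (N : ℝ)) * ∑ k ∈ Icc 1 n,
    ((((N : ℝ) - k) * A₀ k - B₁ k) * cos ((k : ℝ) * x) +
     ((k : ℝ) * A₀ k + B₁ k) * cos (((N : ℝ) - k) * x) +
     (((N : ℝ) - k) * B₀ k + A₁ k) * sin ((k : ℝ) * x) +
     (-(k : ℝ) * B₀ k + A₁ k) * sin (((N : ℝ) - k) * x))

theorem cos_sub_mul_of_mul_eq {N x : ℝ} {m : ℤ} (hx : N * x = m * (2 * π)) (k : ℝ) :
    cos ((N - k) * x) = cos (k * x) := by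
  rw [sub_mul, hx, cos_int_mul_two_pi_sub]

theorem sin_sub_mul_of_mul_eq {N x : ℝ} {m : ℤ} (hx : N * x = m * (2 * π)) (k : ℝ) :
    sin ((N - k) * x) = -sin (k * x) := by
  rw [sub_mul, hx, sin_int_mul_two_pi_sub]

theorem hasDerivAt_cos_add_sin (a b ω x : ℝ) :
    HasDerivAt (fun y => a * cos (ω * y) + b * sin (ω * y))
      (ω * (b * cos (ω * x) - a * sin (ω * x))) x := by
  have hω : HasDerivAt (fun y => ω * y) ω x := by simpa using (hasDerivAt_id x).const_mul ω
  exact ((hω.cos.const_mul a).fun_add (hω.sin.const_mul b)).congr_deriv (by ring)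

section HermiteTrigPoly

variable {n N : ℕ} {A₀ B₀ A₁ B₁ : ℕ → ℝ} {x : ℝ} {m : ℤ}

theorem hermiteTrigPoly_of_mul_eq (hN : N ≠ 0) (hx : N * x = m * (2 * π)) :
    hermiteTrigPoly n N A₀ B₀ A₁ B₁ x = trigPoly n A₀ B₀ x := by
  rw [hermiteTrigPoly, trigPoly, mul_sum]
  congr 1
  refine sum_congr rfl fun k _ => ?_
  rw [cos_sub_mul_of_mul_eq hx, sin_sub_mul_of_mul_eq hx]
  field_simp
  ring

theorem deriv_hermiteTrigPoly_of_mul_eq (hN : N ≠ 0) (hx : N * x = m * (2 * π)) :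
    deriv (hermiteTrigPoly n N A₀ B₀ A₁ B₁) x = trigPoly n A₁ B₁ x - A₁ 0 / 2 := by
  have hsplit : hermiteTrigPoly n N A₀ B₀ A₁ B₁ = fun y => A₀ 0 / 2 + (1 / (N : ℝ)) *
      ∑ k ∈ Icc 1 n,
        ((((N - k) * A₀ k - B₁ k) * cos (k * y) + ((N - k) * B₀ k + A₁ k) * sin (k * y)) +
         ((k * A₀ k + B₁ k) * cos ((N - k) * y) + (-k * B₀ k + A₁ k) * sin ((N - k) * y))) := by
    funext y
    rw [hermiteTrigPoly]
    congr 2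
    exact sum_congr rfl fun k _ => by ring
  have hd : HasDerivAt (hermiteTrigPoly n N A₀ B₀ A₁ B₁) ((1 / (N : ℝ)) * ∑ k ∈ Icc 1 n,
      (k * (((N - k) * B₀ k + A₁ k) * cos (k * x) - ((N - k) * A₀ k - B₁ k) * sin (k * x)) +
       (N - k) * ((-k * B₀ k + A₁ k) * cos ((N - k) * x) - (k * A₀ k + B₁ k) * sin ((N - k) * x))))
      x := by
    rw [hsplit]
    apply HasDerivAt.const_add
    apply HasDerivAt.const_mul
    exact HasDerivAt.fun_sum fun k _ =>
      (hasDerivAt_cos_add_sin _ _ _ x).fun_add (hasDerivAt_cos_add_sin _ _ _ x)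
  rw [hd.deriv, trigPoly, add_sub_cancel_left, mul_sum]
  refine sum_congr rfl fun k _ => ?_
  rw [cos_sub_mul_of_mul_eq hx, sin_sub_mul_of_mul_eq hx]
  field_simp
  ring

end HermiteTrigPoly

theorem hermite_interpolation_p1_grid0_general (n : ℕ) (N : ℕ) (hN : N = 2 * n + 1)
    (t : ℕ → ℝ) (ht : ∀ j, t j = 2 * π * ((j : ℝ) - 1) / N)
    (f g : ℕ → ℝ) (hg : ∑ j ∈ Icc 1 N, g j = 0)
    (A₀ B₀ A₁ B₁ : ℕ → ℝ)
    (hA₀ : ∀ k, A₀ k = 2 / (N : ℝ) * ∑ j ∈ Icc 1 N, f j * cos ((k : ℝ) * t j))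
    (hB₀ : ∀ k, B₀ k = 2 / (N : ℝ) * ∑ j ∈ Icc 1 N, f j * sin ((k : ℝ) * t j))
    (hA₁ : ∀ k, A₁ k = 2 / (N : ℝ) * ∑ j ∈ Icc 1 N, g j * cos ((k : ℝ) * t j))
    (hB₁ : ∀ k, B₁ k = 2 / (N : ℝ) * ∑ j ∈ Icc 1 N, g j * sin ((k : ℝ) * t j))
    (T : ℝ → ℝ)
    (hT : ∀ x : ℝ, T x = A₀ 0 / 2 + (1 / (N : ℝ)) * ∑ k ∈ Icc 1 n,
      ((((N : ℝ) - k) * A₀ k - B₁ k) * cos ((k : ℝ) * x) +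
       ((k : ℝ) * A₀ k + B₁ k) * cos (((N : ℝ) - k) * x) +
       (((N : ℝ) - k) * B₀ k + A₁ k) * sin ((k : ℝ) * x) +
       (-(k : ℝ) * B₀ k + A₁ k) * sin (((N : ℝ) - k) * x))) :
    ∀ j ∈ Icc 1 N, T (t j) = f j ∧ deriv T (t j) = g j := by
  obtain rfl : T = hermiteTrigPoly n N A₀ B₀ A₁ B₁ := funext hT
  have hN0 : N ≠ 0 := by omega
  have hA₁0 : A₁ 0 = 0 := by simp [hA₁, hg]
  intro j hj
  have hnode : (N : ℝ) * t j = ((j - 1 : ℤ) : ℝ) * (2 * π) := by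
    rw [ht]
    field_simp
    push_cast
    ring
  rw [hermiteTrigPoly_of_mul_eq hN0 hnode, deriv_hermiteTrigPoly_of_mul_eq hN0 hnode,
    trigPoly_apply_node hN ht hA₀ hB₀ hj, trigPoly_apply_node hN ht hA₁ hB₁ hj, hA₁0]
  exact ⟨rfl, by ring⟩

/-- The Hermite trigonometric polynomial of formula (5), built from the discrete
Fourier coefficients of the data `f_j` (function values) and `g_j` (centered
derivative values), solves the Hermite interpolation problem of order `p = 1`
on the grid `Δ_N^{(0)}` with nodes `t_j = 2π(j-1)/N`, `N = 2n+1`. -/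
theorem hermite_interpolation_p1_grid0 (n : ℕ) (hn : 1 ≤ n) (N : ℕ) (hN : N = 2 * n + 1)
    (t : ℕ → ℝ) (ht : ∀ j, t j = 2 * π * ((j : ℝ) - 1) / N)
    (f g : ℕ → ℝ) (hg : ∑ j ∈ Icc 1 N, g j = 0)
    (A₀ B₀ A₁ B₁ : ℕ → ℝ)
    (hA₀ : ∀ k, A₀ k = 2 / (N : ℝ) * ∑ j ∈ Icc 1 N, f j * cos ((k : ℝ) * t j))
    (hB₀ : ∀ k, B₀ k = 2 / (N : ℝ) * ∑ j ∈ Icc 1 N, f j * sin ((k : ℝ) * t j))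
    (hA₁ : ∀ k, A₁ k = 2 / (N : ℝ) * ∑ j ∈ Icc 1 N, g j * cos ((k : ℝ) * t j))
    (hB₁ : ∀ k, B₁ k = 2 / (N : ℝ) * ∑ j ∈ Icc 1 N, g j * sin ((k : ℝ) * t j))
    (T : ℝ → ℝ)
    (hT : ∀ x : ℝ, T x = A₀ 0 / 2 + (1 / (N : ℝ)) * ∑ k ∈ Icc 1 n,
      ((((N : ℝ) - k) * A₀ k - B₁ k) * cos ((k : ℝ) * x) +
       ((k : ℝ) * A₀ k + B₁ k) * cos (((N : ℝ) - k) * x) +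
       (((N : ℝ) - k) * B₀ k + A₁ k) * sin ((k : ℝ) * x) +
       (-(k : ℝ) * B₀ k + A₁ k) * sin (((N : ℝ) - k) * x))) :
    ∀ j ∈ Icc 1 N, T (t j) = f j ∧ deriv T (t j) = g j :=
  hermite_interpolation_p1_grid0_general n N hN t ht f g hg A₀ B₀ A₁ B₁ hA₀ hB₀ hA₁ hB₁ T hT
end

section
/- Let N = 2n+1 with n ≥ 1, let t_j = 2π(j−1)/N for j = 1,…,N, and let f_j, g_j, h_j (j = 1,…,N) be real numbers with Σ_j g_j = 0 and Σ_j h_j = 0. Define, for k = 0,…,n, A_{0,k} = (2/N) Σ_j f_j cos(k t_j), B_{0,k} = (2/N) Σ_j f_j sin(k t_j), A_{1,k}, B_{1,k} analogously from the g_j, and A_{2,k}, B_{2,k} analogously from the h_j. Set T(t) = A_{0,0}/2 + Σ_{k=1}^{n} [ a_k cos(kt) + a_{N−k} cos((N−k)t) + a_{N+k} cos((N+k)t) + b_k sin(kt) + b_{N−k} sin((N−k)t) + b_{N+k} sin((N+k)t) ] with a_k = [A_{0,k}(N²−k²) − 2kB_{1,k} + A_{2,k}]/N², b_k = [B_{0,k}(N²−k²)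 + 2kA_{1,k} + B_{2,k}]/N², a_{N−k} = [A_{0,k}(kN+k²) + B_{1,k}(N+2k) − A_{2,k}]/(2N²), b_{N−k} = [−B_{0,k}(kN+k²) + A_{1,k}(N+2k) + B_{2,k}]/(2N²), a_{N+k} = [A_{0,k}(k²−kN) + B_{1,k}(2k−N) − A_{2,k}]/(2N²), b_{N+k} = [B_{0,k}(k²−kN) + A_{1,k}(N−2k) − B_{2,k}]/(2N²). Then for every j = 1,…,N: T(t_j) = f_j, T′(t_j) = g_j, and T″(t_j) = h_j. -/
/-!
At a node `t_j` we have `N t_j ∈ 2πℤ`, so the frequencies `N - k` and `N + k` alias to `k`: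
`cos ((N ± k) t_j) = cos (k t_j)` and `sin ((N ± k) t_j) = ± sin (k t_j)`. Differentiation maps
the coefficients `(a_m, b_m)` of frequency `m` to `(m b_m, -m a_m)`, so `T`, `T'` and `T''` agree
on the grid with trigonometric polynomials of degree `n` whose coefficients are aliased sums of
those of `T`; the formulas for `a` and `b` are made so that these sums are `(A₀, B₀)`, `(A₁, B₁)`
and `(A₂, B₂)`. Discrete Fourier inversion on the `2n + 1` equispaced nodes, which rests on the
Dirichlet kernel `1 + 2 ∑ₖ cos (k θ)` vanishing at the nonzero multiples `θ` of `2π/N`, then returns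
`f_j`, `g_j`, `h_j`; for `g` and `h` the constant term is zero because the data are centered.
-/

open Real Finset

noncomputable def sinusoid (r c s x : ℝ) : ℝ := c * cos (r * x) + s * sin (r * x)

theorem hasDerivAt_sinusoid (r c s x : ℝ) :
    HasDerivAt (sinusoid r c s) (sinusoid r (r * s) (-(r * c)) x) x := by
  have hr : HasDerivAt (fun y => r * y) r x := by simpa using (hasDerivAt_id x).const_mul r
  refine ((hr.cos.const_mul c).fun_add (hr.sin.const_mul s)).congr_deriv ?_
  simp only [sinusoid]
  ring

theorem sinusoid_sub_of_cos_eq_one {ν x : ℝ} (hx : cos (ν * x) = 1) (r c s : ℝ) :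
    sinusoid (ν - r) c s x = sinusoid r c (-s) x := by
  have hsin : sin (ν * x) = 0 := sin_eq_zero_iff_cos_eq.mpr (Or.inl hx)
  simp only [sinusoid, sub_mul, cos_sub, sin_sub, hx, hsin]
  ring

theorem sinusoid_add_of_cos_eq_one {ν x : ℝ} (hx : cos (ν * x) = 1) (r c s : ℝ) :
    sinusoid (ν + r) c s x = sinusoid r c s x := by
  have hsin : sin (ν * x) = 0 := sin_eq_zero_iff_cos_eq.mpr (Or.inl hx)
  simp only [sinusoid, add_mul, cos_add, sin_add, hx, hsin]
  ring

theorem sinusoid_add_sinusoid (r c s c' s' x : ℝ) :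
    sinusoid r c s x + sinusoid r c' s' x = sinusoid r (c + c') (s + s') x := by
  simp only [sinusoid]
  ring

/-- Formula (8) without its constant term; `a m` and `b m` are the coefficients of frequency `m`. -/
noncomputable def hermiteSum (N n : ℕ) (a b : ℕ → ℝ) (x : ℝ) : ℝ :=
  ∑ k ∈ Icc 1 n, (sinusoid k (a k) (b k) x + sinusoid ((N : ℝ) - k) (a (N - k)) (b (N - k)) x
    + sinusoid ((N : ℝ) + k) (a (N + k)) (b (N + k)) x)

theorem hasDerivAt_hermiteSum {N n : ℕ} (hnN : n ≤ N) {a b a' b' : ℕ → ℝ}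
    (ha' : ∀ m, a' m = m * b m) (hb' : ∀ m, b' m = -(m * a m)) (x : ℝ) :
    HasDerivAt (hermiteSum N n a b) (hermiteSum N n a' b' x) x := by
  unfold hermiteSum
  refine HasDerivAt.fun_sum fun k hk => ?_
  have hk : k ≤ N := by grind
  convert ((hasDerivAt_sinusoid k (a k) (b k) x).fun_add
    (hasDerivAt_sinusoid ((N : ℝ) - k) (a (N - k)) (b (N - k)) x)).fun_add
    (hasDerivAt_sinusoid ((N : ℝ) + k) (a (N + k)) (b (N + k)) x) using 1
  simp only [ha', hb', Nat.cast_sub hk, Nat.cast_add]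

theorem deriv_hermiteSum {N n : ℕ} (hnN : n ≤ N) {a b a' b' : ℕ → ℝ}
    (ha' : ∀ m, a' m = m * b m) (hb' : ∀ m, b' m = -(m * a m)) :
    deriv (hermiteSum N n a b) = hermiteSum N n a' b' :=
  funext fun x => (hasDerivAt_hermiteSum hnN ha' hb' x).deriv

theorem hermiteSum_of_cos_eq_one {N n : ℕ} {a b A B : ℕ → ℝ} {x : ℝ} (hx : cos (N * x) = 1)
    (hA : ∀ k ∈ Icc 1 n, a k + a (N - k) + a (N + k) = A k)
    (hB : ∀ k ∈ Icc 1 n, b k - b (N - k) + b (N + k) = B k) :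
    hermiteSum N n a b x = ∑ k ∈ Icc 1 n, sinusoid k (A k) (B k) x := by
  refine sum_congr rfl fun k hk => ?_
  rw [sinusoid_sub_of_cos_eq_one hx, sinusoid_add_of_cos_eq_one hx, sinusoid_add_sinusoid,
    sinusoid_add_sinusoid, hA k hk, ← hB k hk, sub_eq_add_neg]

/-- The pairs are the aliased sums of the coefficients `(a_m, b_m)`, `(m b_m, -m a_m)` and
`(-m² a_m, -m² b_m)` of `T`, `T'` and `T''`, written as `hermiteSum_of_cos_eq_one` consumes them. -/
theorem hermite_aliased_coefficients {N k : ℕ} (hk : k ≤ N) (hN : N ≠ 0)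
    {A₀ B₀ A₁ B₁ A₂ B₂ : ℝ} {a b : ℕ → ℝ}
    (hab : a k = (A₀ * ((N : ℝ) ^ 2 - (k : ℝ) ^ 2) - 2 * k * B₁ + A₂) / (N : ℝ) ^ 2 ∧
      b k = (B₀ * ((N : ℝ) ^ 2 - (k : ℝ) ^ 2) + 2 * k * A₁ + B₂) / (N : ℝ) ^ 2 ∧
      a (N - k) = (A₀ * ((k : ℝ) * N + (k : ℝ) ^ 2) + B₁ * ((N : ℝ) + 2 * k) - A₂) /
        (2 * (N : ℝ) ^ 2) ∧
      b (N - k) = (-B₀ * ((k : ℝ) * N + (k : ℝ) ^ 2) + A₁ * ((N : ℝ) + 2 * k) + B₂) /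
        (2 * (N : ℝ) ^ 2) ∧
      a (N + k) = (A₀ * ((k : ℝ) ^ 2 - (k : ℝ) * N) + B₁ * (2 * k - (N : ℝ)) - A₂) /
        (2 * (N : ℝ) ^ 2) ∧
      b (N + k) = (B₀ * ((k : ℝ) ^ 2 - (k : ℝ) * N) + A₁ * ((N : ℝ) - 2 * k) - B₂) /
        (2 * (N : ℝ) ^ 2)) :
    (a k + a (N - k) + a (N + k) = A₀ ∧ b k - b (N - k) + b (N + k) = B₀) ∧
    (k * b k + (N - k : ℕ) * b (N - k) + (N + k : ℕ) * b (N + k) = A₁ ∧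
      -(k * a k) - -((N - k : ℕ) * a (N - k)) + -((N + k : ℕ) * a (N + k)) = B₁) ∧
    (-(k ^ 2 * a k) + -((N - k : ℕ) ^ 2 * a (N - k)) + -((N + k : ℕ) ^ 2 * a (N + k)) = A₂ ∧
      -(k ^ 2 * b k) - -((N - k : ℕ) ^ 2 * b (N - k)) + -((N + k : ℕ) ^ 2 * b (N + k)) = B₂) := by
  obtain ⟨ha₁, hb₁, ha₂, hb₂, ha₃, hb₃⟩ := hab
  have hN' : (N : ℝ) ≠ 0 := Nat.cast_ne_zero.mpr hN
  push_cast [Nat.cast_sub hk]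
  rw [ha₁, hb₁, ha₂, hb₂, ha₃, hb₃]
  refine ⟨⟨?_, ?_⟩, ⟨?_, ?_⟩, ⟨?_, ?_⟩⟩ <;> field_simp <;> ring

theorem cos_natCast_mul_node {N : ℕ} (hN : N ≠ 0) {t : ℕ → ℝ}
    (ht : ∀ j, t j = 2 * π * ((j : ℝ) - 1) / N) (j : ℕ) : cos (N * t j) = 1 :=
  (cos_eq_one_iff _).mpr ⟨j - 1, by rw [ht]; push_cast; field_simp⟩

theorem sum_Icc_cos_mul_eq_neg_half {n N : ℕ} (hN : N = 2 * n + 1) {m : ℤ} (hm : ¬ (N : ℤ) ∣ m) :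
    ∑ k ∈ Icc 1 n, cos (k * (2 * π * m / N)) = -(1 / 2) := by
  set θ := 2 * π * m / N
  have hNθ : (2 * n + 1) * (θ / 2) = m * π := by
    simp only [θ, hN]; push_cast; field_simp
  have hsin : sin (θ / 2) ≠ 0 := by
    rw [Ne, sin_eq_zero_iff]
    rintro ⟨q, hq⟩
    apply hm
    refine ⟨q, ?_⟩
    have : (m : ℝ) * π = (N * q : ℝ) * π := by
      rw [← hNθ, ← hq, hN]; push_cast; ring
    exact_mod_cast mul_right_cancel₀ pi_ne_zero this
  have hshift : ∑ k ∈ Icc 1 n, cos (k * θ) = ∑ i ∈ range n, cos (θ * i + θ) := by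
    rw [← Ico_add_one_right_eq_Icc, sum_Ico_eq_sum_range, Nat.add_sub_cancel]
    refine sum_congr rfl fun i _ => ?_
    push_cast; ring_nf
  have hsum := sin_mul_sum_cos n θ θ
  rw [← hshift] at hsum
  apply mul_left_cancel₀ (mul_ne_zero two_ne_zero hsin)
  rw [mul_assoc, hsum, ← mul_assoc, two_mul_sin_mul_cos, show n * θ / 2 - ((n - 1) * θ / 2 + θ) = -(θ / 2) by ring,
    show n * θ / 2 + ((n - 1) * θ / 2 + θ) = (2 * n + 1) * (θ / 2) by ring,
    hNθ, sin_neg, sin_int_mul_pi]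
  ring

theorem one_add_two_mul_sum_cos_sub_nodes {n N : ℕ} (hN : N = 2 * n + 1) {t : ℕ → ℝ}
    (ht : ∀ j, t j = 2 * π * ((j : ℝ) - 1) / N) {i j : ℕ} (hi : i ∈ Icc 1 N)
    (hj : j ∈ Icc 1 N) :
    1 + 2 * ∑ k ∈ Icc 1 n, cos (k * (t i - t j)) = if i = j then (N : ℝ) else 0 := by
  split_ifs with hij
  · simp [hij, hN]
    ring
  · rw [mem_Icc] at hi hj
    have hdiff : t i - t j = 2 * π * ((i - j : ℤ) : ℝ) / N := by
      rw [ht, ht]; push_cast; ring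
    have hndvd : ¬ (N : ℤ) ∣ (i - j : ℤ) := fun hdvd =>
      hij (by have := Int.eq_zero_of_abs_lt_dvd hdvd (abs_lt.mpr ⟨by omega, by omega⟩); omega)
    rw [hdiff, sum_Icc_cos_mul_eq_neg_half hN hndvd]
    ring

theorem dft_inversion_at_node {n N : ℕ} (hN : N = 2 * n + 1) {t : ℕ → ℝ}
    (ht : ∀ j, t j = 2 * π * ((j : ℝ) - 1) / N) {u A B : ℕ → ℝ}
    (hA : ∀ k ∈ Icc 0 n, A k = 2 / (N : ℝ) * ∑ i ∈ Icc 1 N, u i * cos ((k : ℝ) * t i))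
    (hB : ∀ k ∈ Icc 0 n, B k = 2 / (N : ℝ) * ∑ i ∈ Icc 1 N, u i * sin ((k : ℝ) * t i))
    {j : ℕ} (hj : j ∈ Icc 1 N) :
    A 0 / 2 + ∑ k ∈ Icc 1 n, sinusoid k (A k) (B k) (t j) = u j := by
  have hN0 : (N : ℝ) ≠ 0 := Nat.cast_ne_zero.mpr (by omega)
  have hterm : ∀ k ∈ Icc 1 n, sinusoid k (A k) (B k) (t j) =
      ∑ i ∈ Icc 1 N, u i / N * (2 * cos (k * (t i - t j))) := fun k hk => by
    rw [hA k (by grind), hB k (by grind), sinusoid, mul_sum, mul_sum, sum_mul, sum_mul,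
      ← sum_add_distrib]
    refine sum_congr rfl fun i _ => ?_
    rw [mul_sub, cos_sub]
    ring
  calc A 0 / 2 + ∑ k ∈ Icc 1 n, sinusoid k (A k) (B k) (t j)
      = ∑ i ∈ Icc 1 N, u i / N * (1 + 2 * ∑ k ∈ Icc 1 n, cos (k * (t i - t j))) := by
        simp only [sum_congr rfl hterm, hA 0 (by simp), mul_add, mul_one, mul_sum]
        rw [sum_comm, sum_add_distrib, sum_div]
        congr 1
        refine sum_congr rfl fun i _ => ?_
        simp only [CharP.cast_eq_zero, zero_mul, cos_zero]
        ring
    _ = ∑ i ∈ Icc 1 N, u i / N * if i = j then (N : ℝ) else 0 :=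
        sum_congr rfl fun i hi => by rw [one_add_two_mul_sum_cos_sub_nodes hN ht hi hj]
    _ = u j := by
        simp only [mul_ite, mul_zero, sum_ite_eq', hj, if_true]
        field_simp

theorem hermite_interpolation_p2_grid0_general (n : ℕ) (N : ℕ) (hN : N = 2 * n + 1)
    (t : ℕ → ℝ) (ht : ∀ j, t j = 2 * π * ((j : ℝ) - 1) / N)
    (f g h : ℕ → ℝ) (hg : ∑ j ∈ Icc 1 N, g j = 0) (hh : ∑ j ∈ Icc 1 N, h j = 0)
    (A₀ B₀ A₁ B₁ A₂ B₂ : ℕ → ℝ)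
    (hA₀ : ∀ k ∈ Icc 0 n, A₀ k = 2 / (N : ℝ) * ∑ j ∈ Icc 1 N, f j * cos ((k : ℝ) * t j))
    (hB₀ : ∀ k ∈ Icc 0 n, B₀ k = 2 / (N : ℝ) * ∑ j ∈ Icc 1 N, f j * sin ((k : ℝ) * t j))
    (hA₁ : ∀ k ∈ Icc 0 n, A₁ k = 2 / (N : ℝ) * ∑ j ∈ Icc 1 N, g j * cos ((k : ℝ) * t j))
    (hB₁ : ∀ k ∈ Icc 0 n, B₁ k = 2 / (N : ℝ) * ∑ j ∈ Icc 1 N, g j * sin ((k : ℝ) * t j))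
    (hA₂ : ∀ k ∈ Icc 0 n, A₂ k = 2 / (N : ℝ) * ∑ j ∈ Icc 1 N, h j * cos ((k : ℝ) * t j))
    (hB₂ : ∀ k ∈ Icc 0 n, B₂ k = 2 / (N : ℝ) * ∑ j ∈ Icc 1 N, h j * sin ((k : ℝ) * t j))
    (a b : ℕ → ℝ)
    (hab : ∀ k ∈ Icc 1 n,
      a k = (A₀ k * ((N : ℝ) ^ 2 - (k : ℝ) ^ 2) - 2 * k * B₁ k + A₂ k) / (N : ℝ) ^ 2 ∧
      b k = (B₀ k * ((N : ℝ) ^ 2 - (k : ℝ) ^ 2) + 2 * k * A₁ k + B₂ k) / (N : ℝ) ^ 2 ∧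
      a (N - k) = (A₀ k * ((k : ℝ) * N + (k : ℝ) ^ 2) + B₁ k * ((N : ℝ) + 2 * k) - A₂ k) /
        (2 * (N : ℝ) ^ 2) ∧
      b (N - k) = (-B₀ k * ((k : ℝ) * N + (k : ℝ) ^ 2) + A₁ k * ((N : ℝ) + 2 * k) + B₂ k) /
        (2 * (N : ℝ) ^ 2) ∧
      a (N + k) = (A₀ k * ((k : ℝ) ^ 2 - (k : ℝ) * N) + B₁ k * (2 * k - (N : ℝ)) - A₂ k) /
        (2 * (N : ℝ) ^ 2) ∧
      b (N + k) = (B₀ k * ((k : ℝ) ^ 2 - (k : ℝ) * N) + A₁ k * ((N : ℝ) - 2 * k) - B₂ k) /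
        (2 * (N : ℝ) ^ 2))
    (T : ℝ → ℝ)
    (hT : ∀ x : ℝ, T x = A₀ 0 / 2 + ∑ k ∈ Icc 1 n,
      (a k * cos ((k : ℝ) * x) + a (N - k) * cos (((N : ℝ) - k) * x) +
       a (N + k) * cos (((N : ℝ) + k) * x) +
       b k * sin ((k : ℝ) * x) + b (N - k) * sin (((N : ℝ) - k) * x) +
       b (N + k) * sin (((N : ℝ) + k) * x))) :
    ∀ j ∈ Icc 1 N, T (t j) = f j ∧ deriv T (t j) = g j ∧ deriv (deriv T) (t j) = h j := by
  intro j hj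
  have hnN : n ≤ N := by omega
  have hnode : cos (N * t j) = 1 := cos_natCast_mul_node (by omega) ht j
  have hcoef := fun k (hk : k ∈ Icc 1 n) =>
    hermite_aliased_coefficients (by grind) (by omega) (hab k hk)
  have hT₀ : ∀ x, T x = A₀ 0 / 2 + hermiteSum N n a b x := fun x => by
    simp only [hT, hermiteSum, sinusoid]
    exact congrArg _ (sum_congr rfl fun k _ => by ring)
  have hT₁ : deriv T = hermiteSum N n (fun m => m * b m) (fun m => -(m * a m)) := by
    rw [funext hT₀, deriv_const_add', deriv_hermiteSum hnN (fun _ => rfl) (fun _ => rfl)]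
  have hT₂ : deriv (deriv T) =
      hermiteSum N n (fun m => -(m ^ 2 * a m)) (fun m => -(m ^ 2 * b m)) := by
    rw [hT₁]
    exact deriv_hermiteSum hnN (fun _ => by ring) (fun _ => by ring)
  have hA₁0 : A₁ 0 = 0 := by simp [hA₁ 0 (by simp), hg]
  have hA₂0 : A₂ 0 = 0 := by simp [hA₂ 0 (by simp), hh]
  refine ⟨?_, ?_, ?_⟩
  · rw [hT₀, hermiteSum_of_cos_eq_one hnode (fun k hk => (hcoef k hk).1.1)
      (fun k hk => (hcoef k hk).1.2)]
    exact dft_inversion_at_node hN ht hA₀ hB₀ hj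
  · rw [hT₁, hermiteSum_of_cos_eq_one hnode (fun k hk => (hcoef k hk).2.1.1)
      (fun k hk => (hcoef k hk).2.1.2), ← dft_inversion_at_node hN ht hA₁ hB₁ hj, hA₁0]
    ring
  · rw [hT₂, hermiteSum_of_cos_eq_one hnode (fun k hk => (hcoef k hk).2.2.1)
      (fun k hk => (hcoef k hk).2.2.2), ← dft_inversion_at_node hN ht hA₂ hB₂ hj, hA₂0]
    ring

/-- The Hermite trigonometric polynomial of formula (8) with `I = 0`, built from
the discrete Fourier coefficients of the data `f_j`, `g_j`, `h_j` (function,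
first- and second-derivative values, the derivative data being centered),
solves the Hermite interpolation problem of order `p = 2` on the grid
`Δ_N^{(0)}` with nodes `t_j = 2π(j-1)/N`, `N = 2n+1`. -/
theorem hermite_interpolation_p2_grid0 (n : ℕ) (hn : 1 ≤ n) (N : ℕ) (hN : N = 2 * n + 1)
    (t : ℕ → ℝ) (ht : ∀ j, t j = 2 * π * ((j : ℝ) - 1) / N)
    (f g h : ℕ → ℝ) (hg : ∑ j ∈ Icc 1 N, g j = 0) (hh : ∑ j ∈ Icc 1 N, h j = 0)
    (A₀ B₀ A₁ B₁ A₂ B₂ : ℕ → ℝ)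
    (hA₀ : ∀ k ∈ Icc 0 n, A₀ k = 2 / (N : ℝ) * ∑ j ∈ Icc 1 N, f j * cos ((k : ℝ) * t j))
    (hB₀ : ∀ k ∈ Icc 0 n, B₀ k = 2 / (N : ℝ) * ∑ j ∈ Icc 1 N, f j * sin ((k : ℝ) * t j))
    (hA₁ : ∀ k ∈ Icc 0 n, A₁ k = 2 / (N : ℝ) * ∑ j ∈ Icc 1 N, g j * cos ((k : ℝ) * t j))
    (hB₁ : ∀ k ∈ Icc 0 n, B₁ k = 2 / (N : ℝ) * ∑ j ∈ Icc 1 N, g j * sin ((k : ℝ) * t j))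
    (hA₂ : ∀ k ∈ Icc 0 n, A₂ k = 2 / (N : ℝ) * ∑ j ∈ Icc 1 N, h j * cos ((k : ℝ) * t j))
    (hB₂ : ∀ k ∈ Icc 0 n, B₂ k = 2 / (N : ℝ) * ∑ j ∈ Icc 1 N, h j * sin ((k : ℝ) * t j))
    (a b : ℕ → ℝ)
    (hab : ∀ k ∈ Icc 1 n,
      a k = (A₀ k * ((N : ℝ) ^ 2 - (k : ℝ) ^ 2) - 2 * k * B₁ k + A₂ k) / (N : ℝ) ^ 2 ∧
      b k = (B₀ k * ((N : ℝ) ^ 2 - (k : ℝ) ^ 2) + 2 * k * A₁ k + B₂ k) / (N : ℝ) ^ 2 ∧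
      a (N - k) = (A₀ k * ((k : ℝ) * N + (k : ℝ) ^ 2) + B₁ k * ((N : ℝ) + 2 * k) - A₂ k) /
        (2 * (N : ℝ) ^ 2) ∧
      b (N - k) = (-B₀ k * ((k : ℝ) * N + (k : ℝ) ^ 2) + A₁ k * ((N : ℝ) + 2 * k) + B₂ k) /
        (2 * (N : ℝ) ^ 2) ∧
      a (N + k) = (A₀ k * ((k : ℝ) ^ 2 - (k : ℝ) * N) + B₁ k * (2 * k - (N : ℝ)) - A₂ k) /
        (2 * (N : ℝ) ^ 2) ∧
      b (N + k) = (B₀ k * ((k : ℝ) ^ 2 - (k : ℝ) * N) + A₁ k * ((N : ℝ) - 2 * k) - B₂ k) /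
        (2 * (N : ℝ) ^ 2))
    (T : ℝ → ℝ)
    (hT : ∀ x : ℝ, T x = A₀ 0 / 2 + ∑ k ∈ Icc 1 n,
      (a k * cos ((k : ℝ) * x) + a (N - k) * cos (((N : ℝ) - k) * x) +
       a (N + k) * cos (((N : ℝ) + k) * x) +
       b k * sin ((k : ℝ) * x) + b (N - k) * sin (((N : ℝ) - k) * x) +
       b (N + k) * sin (((N : ℝ) + k) * x))) :
    ∀ j ∈ Icc 1 N, T (t j) = f j ∧ deriv T (t j) = g j ∧ deriv (deriv T) (t j) = h j :=
  hermite_interpolation_p2_grid0_general n N hN t ht f g h hg hh A₀ B₀ A₁ B₁ A₂ B₂ hA₀ hB₀ hA₁ hB₁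
    hA₂ hB₂ a b hab T hT
end

section
/- Let N = 2n+1 with n ≥ 1, let t_j = π(2j−1)/N for j = 1,…,N, and let f_j, g_j, h_j (j = 1,…,N) be real numbers with Σ_j g_j = 0 and Σ_j h_j = 0. Define, for k = 0,…,n, A_{0,k} = (2/N) Σ_j f_j cos(k t_j), B_{0,k} = (2/N) Σ_j f_j sin(k t_j), A_{1,k}, B_{1,k} analogously from the g_j, and A_{2,k}, B_{2,k} analogously from the h_j. Set T(t) = A_{0,0}/2 + Σ_{k=1}^{n} [ a_k cos(kt) + a_{N−k} cos((N−k)t) + a_{N+k} cos((N+k)t) + b_k sin(kt) + b_{N−k} sin((N−k)t) + b_{N+k} sin((N+k)t) ] with a_k = [A_{0,k}(N²−k²) − 2kB_{1,k} + A_{2,k}]/N², b_k = [B_{0,k}(N²−k²) + 2kA_{1,k} + B_{2,k}]/N², a_{N−k} = [−A_{0,k}(kN+k²) − B_{1,k}(N+2k) + A_{2,k}]/(2N²), b_{N−k} = [B_{0,k}(kN+k²) − A_{1,k}(N+2k) − B_{2,k}]/(2N²), a_{N+k} = [A_{0,k}(kN−k²) + B_{1,k}(N−2k) + A_{2,k}]/(2N²),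 b_{N+k} = [B_{0,k}(kN−k²) − A_{1,k}(N−2k) + B_{2,k}]/(2N²). Then for every j = 1,…,N: T(t_j) = f_j, T′(t_j) = g_j, and T″(t_j) = h_j. -/
open Real Finset

private lemma tele_sum (n : ℕ) (θ : ℝ) :
    Real.sin (θ / 2) * (1 + 2 * ∑ k ∈ Icc 1 n, Real.cos ((k : ℝ) * θ))
      = Real.sin ((2 * (n : ℝ) + 1) * θ / 2) := by
  induction n with
  | zero => norm_num
  | succ m ih =>
    rw [Finset.sum_Icc_succ_top (Nat.succ_le_succ (Nat.zero_le m))]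
    have key : Real.sin ((2 * ((m : ℝ) + 1) + 1) * θ / 2)
        - Real.sin ((2 * (m : ℝ) + 1) * θ / 2)
        = 2 * Real.sin (θ / 2) * Real.cos (((m : ℝ) + 1) * θ) := by
      rw [Real.sin_sub_sin]
      ring_nf
    push_cast
    linear_combination ih - key

private lemma kernel_eval (n N : ℕ) (hN : N = 2 * n + 1) (t : ℕ → ℝ)
    (ht : ∀ j, t j = π * (2 * (j : ℝ) - 1) / N)
    (m j : ℕ) (hm : m ∈ Icc 1 N) (hj : j ∈ Icc 1 N) :
    1 + 2 * ∑ k ∈ Icc 1 n, Real.cos ((k : ℝ) * (t m - t j))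
      = if m = j then (N : ℝ) else 0 := by
  have hNpos : 0 < N := by omega
  have hN0 : (N : ℝ) ≠ 0 := Nat.cast_ne_zero.mpr hNpos.ne'
  simp only [mem_Icc] at hm hj
  by_cases hmj : m = j
  · subst hmj
    rw [if_pos rfl, sub_self]
    simp only [mul_zero, Real.cos_zero, Finset.sum_const, Nat.card_Icc, smul_eq_mul, mul_one,
      Nat.add_sub_cancel]
    rw [hN]
    push_cast
    ring
  · rw [if_neg hmj]
    have hθ : t m - t j = 2 * π * ((m : ℝ) - j) / N := by
      rw [ht m, ht j]; field_simp; ring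
    have hpos : ∀ p q : ℕ, p ≤ N → 1 ≤ q → q < p → 0 < Real.sin (π * ((p : ℝ) - q) / N) := by
      intro p q hp h1q hq
      apply Real.sin_pos_of_pos_of_lt_pi
      · have h1 : (0 : ℝ) < (p : ℝ) - q := by
          have := Nat.cast_lt (α := ℝ) |>.mpr hq; linarith
        positivity
      · have h2 : (p : ℝ) - q < N := by
          have hp' : (p : ℝ) ≤ N := Nat.cast_le.mpr hp
          have hq' : (1 : ℝ) ≤ q := by exact_mod_cast h1q
          linarith
        have hNr : (0 : ℝ) < N := by exact_mod_cast hNpos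
        rw [div_lt_iff₀ hNr]
        nlinarith [Real.pi_pos]
    have hsin_ne : Real.sin ((t m - t j) / 2) ≠ 0 := by
      have hhalf : (t m - t j) / 2 = π * ((m : ℝ) - j) / N := by rw [hθ]; ring
      rw [hhalf]
      rcases Nat.lt_or_ge m j with hlt | hge
      · have h1 := hpos j m hj.2 hm.1 hlt
        have heq : π * ((m : ℝ) - j) / N = -(π * ((j : ℝ) - m) / N) := by ring
        rw [heq, Real.sin_neg]
        exact neg_ne_zero.mpr (ne_of_gt h1)
      · have hgt : j < m := lt_of_le_of_ne hge (fun hh => hmj hh.symm)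
        exact ne_of_gt (hpos m j hm.2 hj.1 hgt)
    have hzero : Real.sin ((2 * (n : ℝ) + 1) * (t m - t j) / 2) = 0 := by
      have harg : (2 * (n : ℝ) + 1) * (t m - t j) / 2 = ((m : ℝ) - (j : ℝ)) * π := by
        rw [hθ]
        have hNr : (2 * (n : ℝ) + 1) = (N : ℝ) := by rw [hN]; push_cast; ring
        rw [hNr]
        field_simp
      rw [harg]
      have := Real.sin_int_mul_pi ((m : ℤ) - j)
      push_cast at this
      exact this
    have htele := tele_sum n (t m - t j)
    rw [hzero] at htele
    rcases mul_eq_zero.mp htele with hcontra | hok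
    · exact absurd hcontra hsin_ne
    · exact hok

private lemma inv_lemma (n N : ℕ) (hN : N = 2 * n + 1) (t : ℕ → ℝ)
    (ht : ∀ j, t j = π * (2 * (j : ℝ) - 1) / N)
    (v : ℕ → ℝ) (j : ℕ) (hj : j ∈ Icc 1 N) :
    (∑ m ∈ Icc 1 N, v m) / N
      + ∑ k ∈ Icc 1 n,
        ((2 / (N : ℝ) * ∑ m ∈ Icc 1 N, v m * Real.cos ((k : ℝ) * t m)) * Real.cos ((k : ℝ) * t j)
        + (2 / (N : ℝ) * ∑ m ∈ Icc 1 N, v m * Real.sin ((k : ℝ) * t m)) * Real.sin ((k : ℝ) * t j))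
      = v j := by
  have hNpos : 0 < N := by omega
  have hN0 : (N : ℝ) ≠ 0 := Nat.cast_ne_zero.mpr hNpos.ne'
  have step1 : ∀ k ∈ Icc 1 n,
      (2 / (N : ℝ) * ∑ m ∈ Icc 1 N, v m * Real.cos ((k : ℝ) * t m)) * Real.cos ((k : ℝ) * t j)
        + (2 / (N : ℝ) * ∑ m ∈ Icc 1 N, v m * Real.sin ((k : ℝ) * t m)) * Real.sin ((k : ℝ) * t j)
      = ∑ m ∈ Icc 1 N, 2 / (N : ℝ) * (v m * Real.cos ((k : ℝ) * (t m - t j))) := by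
    intro k _
    rw [Finset.mul_sum, Finset.mul_sum, Finset.sum_mul, Finset.sum_mul,
      ← Finset.sum_add_distrib]
    refine Finset.sum_congr rfl fun m _ => ?_
    have harg : (k : ℝ) * (t m - t j) = (k : ℝ) * t m - (k : ℝ) * t j := by ring
    rw [harg, Real.cos_sub]
    ring
  rw [Finset.sum_congr rfl step1, Finset.sum_comm, Finset.sum_div, ← Finset.sum_add_distrib]
  have step2 : ∀ m ∈ Icc 1 N,
      v m / N + ∑ k ∈ Icc 1 n, 2 / (N : ℝ) * (v m * Real.cos ((k : ℝ) * (t m - t j)))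
        = if m = j then v m else 0 := by
    intro m hm
    have hk := kernel_eval n N hN t ht m j hm hj
    have hfac : ∑ k ∈ Icc 1 n, 2 / (N : ℝ) * (v m * Real.cos ((k : ℝ) * (t m - t j)))
        = (2 / (N : ℝ) * v m) * ∑ k ∈ Icc 1 n, Real.cos ((k : ℝ) * (t m - t j)) := by
      rw [Finset.mul_sum]
      exact Finset.sum_congr rfl fun _ _ => by ring
    rw [hfac]
    by_cases hmj : m = j
    · rw [if_pos hmj] at hk ⊢
      have hS : ∑ k ∈ Icc 1 n, Real.cos ((k : ℝ) * (t m - t j)) = ((N : ℝ) - 1) / 2 := by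
        linarith
      rw [hS]
      field_simp
      ring
    · rw [if_neg hmj] at hk ⊢
      have hS : ∑ k ∈ Icc 1 n, Real.cos ((k : ℝ) * (t m - t j)) = -(1 / 2) := by
        linarith
      rw [hS]
      ring
  rw [Finset.sum_congr rfl step2, Finset.sum_ite_eq' (Icc 1 N) j v, if_pos hj]

/-- The Hermite trigonometric polynomial of formula (8) with `I = 1`, built from
the discrete Fourier coefficients of the data `f_j`, `g_j`, `h_j` (function,
first- and second-derivative values, the derivative data being centered),
solves the Hermite interpolation problem of order `p = 2` on the grid
`Δ_N^{(1)}` with nodes `t_j = π(2j-1)/N`, `N = 2n+1`. -/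
theorem hermite_interpolation_p2_grid1 (n : ℕ) (hn : 1 ≤ n) (N : ℕ) (hN : N = 2 * n + 1)
    (t : ℕ → ℝ) (ht : ∀ j, t j = π * (2 * (j : ℝ) - 1) / N)
    (f g h : ℕ → ℝ) (hg : ∑ j ∈ Icc 1 N, g j = 0) (hh : ∑ j ∈ Icc 1 N, h j = 0)
    (A₀ B₀ A₁ B₁ A₂ B₂ : ℕ → ℝ)
    (hA₀ : ∀ k ∈ Icc 0 n, A₀ k = 2 / (N : ℝ) * ∑ j ∈ Icc 1 N, f j * cos ((k : ℝ) * t j))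
    (hB₀ : ∀ k ∈ Icc 0 n, B₀ k = 2 / (N : ℝ) * ∑ j ∈ Icc 1 N, f j * sin ((k : ℝ) * t j))
    (hA₁ : ∀ k ∈ Icc 0 n, A₁ k = 2 / (N : ℝ) * ∑ j ∈ Icc 1 N, g j * cos ((k : ℝ) * t j))
    (hB₁ : ∀ k ∈ Icc 0 n, B₁ k = 2 / (N : ℝ) * ∑ j ∈ Icc 1 N, g j * sin ((k : ℝ) * t j))
    (hA₂ : ∀ k ∈ Icc 0 n, A₂ k = 2 / (N : ℝ) * ∑ j ∈ Icc 1 N, h j * cos ((k : ℝ) * t j))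
    (hB₂ : ∀ k ∈ Icc 0 n, B₂ k = 2 / (N : ℝ) * ∑ j ∈ Icc 1 N, h j * sin ((k : ℝ) * t j))
    (a b : ℕ → ℝ)
    (hab : ∀ k ∈ Icc 1 n,
      a k = (A₀ k * ((N : ℝ) ^ 2 - (k : ℝ) ^ 2) - 2 * k * B₁ k + A₂ k) / (N : ℝ) ^ 2 ∧
      b k = (B₀ k * ((N : ℝ) ^ 2 - (k : ℝ) ^ 2) + 2 * k * A₁ k + B₂ k) / (N : ℝ) ^ 2 ∧
      a (N - k) = (-A₀ k * ((k : ℝ) * N + (k : ℝ) ^ 2) - B₁ k * ((N : ℝ) + 2 * k) + A₂ k) /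
        (2 * (N : ℝ) ^ 2) ∧
      b (N - k) = (B₀ k * ((k : ℝ) * N + (k : ℝ) ^ 2) - A₁ k * ((N : ℝ) + 2 * k) - B₂ k) /
        (2 * (N : ℝ) ^ 2) ∧
      a (N + k) = (A₀ k * ((k : ℝ) * N - (k : ℝ) ^ 2) + B₁ k * ((N : ℝ) - 2 * k) + A₂ k) /
        (2 * (N : ℝ) ^ 2) ∧
      b (N + k) = (B₀ k * ((k : ℝ) * N - (k : ℝ) ^ 2) - A₁ k * ((N : ℝ) - 2 * k) + B₂ k) /
        (2 * (N : ℝ) ^ 2))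
    (T : ℝ → ℝ)
    (hT : ∀ x : ℝ, T x = A₀ 0 / 2 + ∑ k ∈ Icc 1 n,
      (a k * cos ((k : ℝ) * x) + a (N - k) * cos (((N : ℝ) - k) * x) +
       a (N + k) * cos (((N : ℝ) + k) * x) +
       b k * sin ((k : ℝ) * x) + b (N - k) * sin (((N : ℝ) - k) * x) +
       b (N + k) * sin (((N : ℝ) + k) * x))) :
    ∀ j ∈ Icc 1 N, T (t j) = f j ∧ deriv T (t j) = g j ∧ deriv (deriv T) (t j) = h j := by
  have hNpos : 0 < N := by omega
  have hN0 : (N : ℝ) ≠ 0 := Nat.cast_ne_zero.mpr hNpos.ne'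
  have hN20 : (N : ℝ) ^ 2 ≠ 0 := pow_ne_zero 2 hN0
  have hmem01 : ∀ k ∈ Icc 1 n, k ∈ Icc 0 n := by
    intro k hk; simp only [mem_Icc] at hk ⊢; omega
  have hTeq : T = fun x => A₀ 0 / 2 + ∑ k ∈ Icc 1 n,
      (a k * cos ((k : ℝ) * x) + a (N - k) * cos (((N : ℝ) - k) * x) +
       a (N + k) * cos (((N : ℝ) + k) * x) +
       b k * sin ((k : ℝ) * x) + b (N - k) * sin (((N : ℝ) - k) * x) +
       b (N + k) * sin (((N : ℝ) + k) * x)) := funext hT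
  subst hTeq
  -- first derivative
  have hD1 : ∀ x : ℝ, HasDerivAt (fun x => A₀ 0 / 2 + ∑ k ∈ Icc 1 n,
      (a k * cos ((k : ℝ) * x) + a (N - k) * cos (((N : ℝ) - k) * x) +
       a (N + k) * cos (((N : ℝ) + k) * x) +
       b k * sin ((k : ℝ) * x) + b (N - k) * sin (((N : ℝ) - k) * x) +
       b (N + k) * sin (((N : ℝ) + k) * x)))
      (∑ k ∈ Icc 1 n,
        (a k * (-Real.sin ((k : ℝ) * x) * ((k : ℝ) * 1)) +
         a (N - k) * (-Real.sin (((N : ℝ) - k) * x) * (((N : ℝ) - k) * 1)) +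
         a (N + k) * (-Real.sin (((N : ℝ) + k) * x) * (((N : ℝ) + k) * 1)) +
         b k * (Real.cos ((k : ℝ) * x) * ((k : ℝ) * 1)) +
         b (N - k) * (Real.cos (((N : ℝ) - k) * x) * (((N : ℝ) - k) * 1)) +
         b (N + k) * (Real.cos (((N : ℝ) + k) * x) * (((N : ℝ) + k) * 1)))) x := by
    intro x
    apply HasDerivAt.const_add
    apply HasDerivAt.fun_sum
    intro k hk
    have h1 := ((((hasDerivAt_id x).const_mul ((k:ℝ))).cos).const_mul (a k))
    have h2 := ((((hasDerivAt_id x).const_mul ((N:ℝ) - k)).cos).const_mul (a (N - k)))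
    have h3 := ((((hasDerivAt_id x).const_mul ((N:ℝ) + k)).cos).const_mul (a (N + k)))
    have h4 := ((((hasDerivAt_id x).const_mul ((k:ℝ))).sin).const_mul (b k))
    have h5 := ((((hasDerivAt_id x).const_mul ((N:ℝ) - k)).sin).const_mul (b (N - k)))
    have h6 := ((((hasDerivAt_id x).const_mul ((N:ℝ) + k)).sin).const_mul (b (N + k)))
    exact ((((h1.add h2).add h3).add h4).add h5).add h6
  have hd1 : deriv (fun x => A₀ 0 / 2 + ∑ k ∈ Icc 1 n,
      (a k * cos ((k : ℝ) * x) + a (N - k) * cos (((N : ℝ) - k) * x) +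
       a (N + k) * cos (((N : ℝ) + k) * x) +
       b k * sin ((k : ℝ) * x) + b (N - k) * sin (((N : ℝ) - k) * x) +
       b (N + k) * sin (((N : ℝ) + k) * x)))
      = fun x => ∑ k ∈ Icc 1 n,
        (a k * (-Real.sin ((k : ℝ) * x) * ((k : ℝ) * 1)) +
         a (N - k) * (-Real.sin (((N : ℝ) - k) * x) * (((N : ℝ) - k) * 1)) +
         a (N + k) * (-Real.sin (((N : ℝ) + k) * x) * (((N : ℝ) + k) * 1)) +
         b k * (Real.cos ((k : ℝ) * x) * ((k : ℝ) * 1)) +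
         b (N - k) * (Real.cos (((N : ℝ) - k) * x) * (((N : ℝ) - k) * 1)) +
         b (N + k) * (Real.cos (((N : ℝ) + k) * x) * (((N : ℝ) + k) * 1))) :=
    funext fun x => (hD1 x).deriv
  -- second derivative
  have hD2 : ∀ x : ℝ, HasDerivAt (fun x => ∑ k ∈ Icc 1 n,
      (a k * (-Real.sin ((k : ℝ) * x) * ((k : ℝ) * 1)) +
       a (N - k) * (-Real.sin (((N : ℝ) - k) * x) * (((N : ℝ) - k) * 1)) +
       a (N + k) * (-Real.sin (((N : ℝ) + k) * x) * (((N : ℝ) + k) * 1)) +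
       b k * (Real.cos ((k : ℝ) * x) * ((k : ℝ) * 1)) +
       b (N - k) * (Real.cos (((N : ℝ) - k) * x) * (((N : ℝ) - k) * 1)) +
       b (N + k) * (Real.cos (((N : ℝ) + k) * x) * (((N : ℝ) + k) * 1))))
      (∑ k ∈ Icc 1 n,
        (a k * (-(Real.cos ((k : ℝ) * x) * ((k : ℝ) * 1)) * ((k : ℝ) * 1)) +
         a (N - k) * (-(Real.cos (((N : ℝ) - k) * x) * (((N : ℝ) - k) * 1)) * (((N : ℝ) - k) * 1)) +
         a (N + k) * (-(Real.cos (((N : ℝ) + k) * x) * (((N : ℝ) + k) * 1)) * (((N : ℝ) + k) * 1)) +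
         b k * (-Real.sin ((k : ℝ) * x) * ((k : ℝ) * 1) * ((k : ℝ) * 1)) +
         b (N - k) * (-Real.sin (((N : ℝ) - k) * x) * (((N : ℝ) - k) * 1) * (((N : ℝ) - k) * 1)) +
         b (N + k) * (-Real.sin (((N : ℝ) + k) * x) * (((N : ℝ) + k) * 1) * (((N : ℝ) + k) * 1)))) x := by
    intro x
    apply HasDerivAt.fun_sum
    intro k hk
    have h1 := ((((((hasDerivAt_id x).const_mul ((k:ℝ))).sin).neg).mul_const ((k:ℝ) * 1)).const_mul (a k))
    have h2 := ((((((hasDerivAt_id x).const_mul ((N:ℝ) - k)).sin).neg).mul_const (((N:ℝ) - k) * 1)).const_mul (a (N - k)))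
    have h3 := ((((((hasDerivAt_id x).const_mul ((N:ℝ) + k)).sin).neg).mul_const (((N:ℝ) + k) * 1)).const_mul (a (N + k)))
    have h4 := (((((hasDerivAt_id x).const_mul ((k:ℝ))).cos).mul_const ((k:ℝ) * 1)).const_mul (b k))
    have h5 := (((((hasDerivAt_id x).const_mul ((N:ℝ) - k)).cos).mul_const (((N:ℝ) - k) * 1)).const_mul (b (N - k)))
    have h6 := (((((hasDerivAt_id x).const_mul ((N:ℝ) + k)).cos).mul_const (((N:ℝ) + k) * 1)).const_mul (b (N + k)))
    exact ((((h1.add h2).add h3).add h4).add h5).add h6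
  have hd2 : deriv (fun x => ∑ k ∈ Icc 1 n,
      (a k * (-Real.sin ((k : ℝ) * x) * ((k : ℝ) * 1)) +
       a (N - k) * (-Real.sin (((N : ℝ) - k) * x) * (((N : ℝ) - k) * 1)) +
       a (N + k) * (-Real.sin (((N : ℝ) + k) * x) * (((N : ℝ) + k) * 1)) +
       b k * (Real.cos ((k : ℝ) * x) * ((k : ℝ) * 1)) +
       b (N - k) * (Real.cos (((N : ℝ) - k) * x) * (((N : ℝ) - k) * 1)) +
       b (N + k) * (Real.cos (((N : ℝ) + k) * x) * (((N : ℝ) + k) * 1))))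
      = fun x => ∑ k ∈ Icc 1 n,
        (a k * (-(Real.cos ((k : ℝ) * x) * ((k : ℝ) * 1)) * ((k : ℝ) * 1)) +
         a (N - k) * (-(Real.cos (((N : ℝ) - k) * x) * (((N : ℝ) - k) * 1)) * (((N : ℝ) - k) * 1)) +
         a (N + k) * (-(Real.cos (((N : ℝ) + k) * x) * (((N : ℝ) + k) * 1)) * (((N : ℝ) + k) * 1)) +
         b k * (-Real.sin ((k : ℝ) * x) * ((k : ℝ) * 1) * ((k : ℝ) * 1)) +
         b (N - k) * (-Real.sin (((N : ℝ) - k) * x) * (((N : ℝ) - k) * 1) * (((N : ℝ) - k) * 1)) +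
         b (N + k) * (-Real.sin (((N : ℝ) + k) * x) * (((N : ℝ) + k) * 1) * (((N : ℝ) + k) * 1))) :=
    funext fun x => (hD2 x).deriv
  intro j hj
  -- node trigonometric identities
  have hcN : Real.cos ((N : ℝ) * t j) = -1 := by
    have harg : (N : ℝ) * t j = ((j : ℤ) : ℝ) * (2 * π) - π := by
      rw [ht j]; push_cast; field_simp
    rw [harg]
    exact Real.cos_int_mul_two_pi_sub_pi j
  have hsN : Real.sin ((N : ℝ) * t j) = 0 := by
    have harg : (N : ℝ) * t j = (2 * (j : ℝ) - 1) * π := by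
      rw [ht j]; field_simp
    rw [harg]
    have := Real.sin_int_mul_pi (2 * (j : ℤ) - 1)
    push_cast at this
    exact this
  have hckm : ∀ k : ℕ, Real.cos (((N : ℝ) - k) * t j) = -Real.cos ((k : ℝ) * t j) := by
    intro k
    rw [show ((N : ℝ) - k) * t j = (N : ℝ) * t j - (k : ℝ) * t j from by ring,
      Real.cos_sub, hcN, hsN]
    ring
  have hckp : ∀ k : ℕ, Real.cos (((N : ℝ) + k) * t j) = -Real.cos ((k : ℝ) * t j) := by
    intro k
    rw [show ((N : ℝ) + k) * t j = (N : ℝ) * t j + (k : ℝ) * t j from by ring,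
      Real.cos_add, hcN, hsN]
    ring
  have hskm : ∀ k : ℕ, Real.sin (((N : ℝ) - k) * t j) = Real.sin ((k : ℝ) * t j) := by
    intro k
    rw [show ((N : ℝ) - k) * t j = (N : ℝ) * t j - (k : ℝ) * t j from by ring,
      Real.sin_sub, hcN, hsN]
    ring
  have hskp : ∀ k : ℕ, Real.sin (((N : ℝ) + k) * t j) = -Real.sin ((k : ℝ) * t j) := by
    intro k
    rw [show ((N : ℝ) + k) * t j = (N : ℝ) * t j + (k : ℝ) * t j from by ring,
      Real.sin_add, hcN, hsN]
    ring
  refine ⟨?_, ?_, ?_⟩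
  · -- value
    have inv_f := inv_lemma n N hN t ht f j hj
    show A₀ 0 / 2 + ∑ k ∈ Icc 1 n,
      (a k * cos ((k : ℝ) * t j) + a (N - k) * cos (((N : ℝ) - k) * t j) +
       a (N + k) * cos (((N : ℝ) + k) * t j) +
       b k * sin ((k : ℝ) * t j) + b (N - k) * sin (((N : ℝ) - k) * t j) +
       b (N + k) * sin (((N : ℝ) + k) * t j)) = f j
    refine Eq.trans ?_ inv_f
    congr 1
    · rw [hA₀ 0 (by simp)]
      simp only [Nat.cast_zero, zero_mul, Real.cos_zero, mul_one]
      ring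
    · refine Finset.sum_congr rfl fun k hk => ?_
      obtain ⟨e1, e2, e3, e4, e5, e6⟩ := hab k hk
      rw [← hA₀ k (hmem01 k hk), ← hB₀ k (hmem01 k hk),
        hckm k, hckp k, hskm k, hskp k, e1, e2, e3, e4, e5, e6]
      field_simp
      ring
  · -- first derivative
    rw [hd1]
    have inv_g := inv_lemma n N hN t ht g j hj
    rw [hg, zero_div, zero_add] at inv_g
    show (∑ k ∈ Icc 1 n,
        (a k * (-Real.sin ((k : ℝ) * t j) * ((k : ℝ) * 1)) +
         a (N - k) * (-Real.sin (((N : ℝ) - k) * t j) * (((N : ℝ) - k) * 1)) +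
         a (N + k) * (-Real.sin (((N : ℝ) + k) * t j) * (((N : ℝ) + k) * 1)) +
         b k * (Real.cos ((k : ℝ) * t j) * ((k : ℝ) * 1)) +
         b (N - k) * (Real.cos (((N : ℝ) - k) * t j) * (((N : ℝ) - k) * 1)) +
         b (N + k) * (Real.cos (((N : ℝ) + k) * t j) * (((N : ℝ) + k) * 1)))) = g j
    refine Eq.trans ?_ inv_g
    refine Finset.sum_congr rfl fun k hk => ?_
    obtain ⟨e1, e2, e3, e4, e5, e6⟩ := hab k hk
    rw [← hA₁ k (hmem01 k hk), ← hB₁ k (hmem01 k hk),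
      hckm k, hckp k, hskm k, hskp k, e1, e2, e3, e4, e5, e6]
    field_simp
    ring
  · -- second derivative
    rw [hd1, hd2]
    have inv_h := inv_lemma n N hN t ht h j hj
    rw [hh, zero_div, zero_add] at inv_h
    show (∑ k ∈ Icc 1 n,
        (a k * (-(Real.cos ((k : ℝ) * t j) * ((k : ℝ) * 1)) * ((k : ℝ) * 1)) +
         a (N - k) * (-(Real.cos (((N : ℝ) - k) * t j) * (((N : ℝ) - k) * 1)) * (((N : ℝ) - k) * 1)) +
         a (N + k) * (-(Real.cos (((N : ℝ) + k) * t j) * (((N : ℝ) + k) * 1)) * (((N : ℝ) + k) * 1)) +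
         b k * (-Real.sin ((k : ℝ) * t j) * ((k : ℝ) * 1) * ((k : ℝ) * 1)) +
         b (N - k) * (-Real.sin (((N : ℝ) - k) * t j) * (((N : ℝ) - k) * 1) * (((N : ℝ) - k) * 1)) +
         b (N + k) * (-Real.sin (((N : ℝ) + k) * t j) * (((N : ℝ) + k) * 1) * (((N : ℝ) + k) * 1)))) = h j
    refine Eq.trans ?_ inv_h
    refine Finset.sum_congr rfl fun k hk => ?_
    obtain ⟨e1, e2, e3, e4, e5, e6⟩ := hab k hk
    rw [← hA₂ k (hmem01 k hk), ← hB₂ k (hmem01 k hk),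
      hckm k, hckp k, hskm k, hskp k, e1, e2, e3, e4, e5, e6]
    field_simp
    ring
end
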